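/- arXiv:2412.00376 — 8 statements merged into one kernel-verified Lean document; each statement's English description precedes it below -/
import Mathlib

section
/- Let α ∈ (1,2) and β > 0. Then ∫_0^∞ [1 − (1+z)^{−β}] z μ_α(dz) = αβΓ(α+β−1)/(Γ(α)Γ(β+1)). -/
/-!
Integrating by parts against `z ^ (1 - α) / (1 - α)` turns `∫₀^∞ (1 - (1 + z)^(-β)) z^(-α) dz`
into `β / (α - 1) · ∫₀^∞ z^(1-α) (1 + z)^(-β-1) dz`; the boundary terms vanish because
`0 ≤ 1 - (1 + z)^(-β) ≤ min 1 (β z)`. The remaining integral is the Beta integral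
`B(2 - α, α + β - 1)`, brought to `(0, 1)` by the substitution `x = z / (1 + z)`.
-/

open MeasureTheory Set Real Filter Topology

lemma integral_Ioo_rpow_mul_one_sub_rpow {u v : ℝ} (hu : 0 < u) (hv : 0 < v) :
    ∫ x in Ioo (0 : ℝ) 1, x ^ (u - 1) * (1 - x) ^ (v - 1)
      = Gamma u * Gamma v / Gamma (u + v) := by
  have hB : Complex.betaIntegral u v
      = ((∫ x in Ioo (0 : ℝ) 1, x ^ (u - 1) * (1 - x) ^ (v - 1) : ℝ) : ℂ) := by
    rw [Complex.betaIntegral, intervalIntegral.integral_of_le zero_le_one,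
      integral_Ioc_eq_integral_Ioo, ← integral_complex_ofReal]
    refine setIntegral_congr_fun measurableSet_Ioo fun x ⟨hx0, hx1⟩ => ?_
    rw [Complex.ofReal_mul, Complex.ofReal_cpow hx0.le, Complex.ofReal_cpow (by linarith)]
    push_cast
    rfl
  have h := Complex.betaIntegral_eq_Gamma_mul_div u v (by simpa) (by simpa)
  rw [hB, ← Complex.ofReal_add, Complex.Gamma_ofReal, Complex.Gamma_ofReal,
    Complex.Gamma_ofReal] at h
  exact_mod_cast h

lemma hasDerivAt_div_one_add {t : ℝ} (ht : 1 + t ≠ 0) :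
    HasDerivAt (fun t : ℝ => t / (1 + t)) (1 / (1 + t) ^ 2) t :=
  ((hasDerivAt_id' t).div ((hasDerivAt_id' t).const_add 1) ht).congr_deriv (by ring)

lemma injOn_div_one_add_Ioi : InjOn (fun t : ℝ => t / (1 + t)) (Ioi 0) := by
  intro a (ha : 0 < a) b (hb : 0 < b) h
  have h' : a * (1 + b) = b * (1 + a) := (div_eq_div_iff (by linarith) (by linarith)).1 h
  linarith

lemma image_div_one_add_Ioi : (fun t : ℝ => t / (1 + t)) '' Ioi 0 = Ioo 0 1 := by
  ext y
  simp only [mem_image, mem_Ioi, mem_Ioo]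
  constructor
  · rintro ⟨t, ht, rfl⟩
    exact ⟨by positivity, (div_lt_one (by linarith)).2 (by linarith)⟩
  · rintro ⟨hy0, hy1⟩
    refine ⟨y / (1 - y), div_pos hy0 (by linarith), ?_⟩
    field_simp
    ring

lemma integral_Ioi_rpow_mul_one_add_rpow {u v : ℝ} (hu : 0 < u) (hv : 0 < v) :
    ∫ t in Ioi (0 : ℝ), t ^ (u - 1) * (1 + t) ^ (-(u + v))
      = Gamma u * Gamma v / Gamma (u + v) := by
  rw [← integral_Ioo_rpow_mul_one_sub_rpow hu hv, ← image_div_one_add_Ioi,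
    integral_image_eq_integral_abs_deriv_smul measurableSet_Ioi
      (fun t (ht : 0 < t) => (hasDerivAt_div_one_add (by positivity)).hasDerivWithinAt)
      injOn_div_one_add_Ioi]
  refine setIntegral_congr_fun measurableSet_Ioi fun t (ht : 0 < t) => ?_
  have h1 : 0 < 1 + t := by linarith
  have hsub : 1 - t / (1 + t) = (1 + t)⁻¹ := by field_simp; ring
  rw [smul_eq_mul, abs_of_pos (by positivity), hsub, div_rpow ht.le h1.le, inv_rpow h1.le,
    ← rpow_neg h1.le, show -(u + v) = -2 + -(u - 1) + -(v - 1) by ring, rpow_add h1,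
    rpow_add h1, rpow_neg h1.le 2, rpow_neg h1.le (u - 1), rpow_two]
  ring

lemma integrableOn_Ioi_rpow_mul_one_add_rpow {u v : ℝ} (hu : 0 < u) (hv : 0 < v) :
    IntegrableOn (fun t : ℝ => t ^ (u - 1) * (1 + t) ^ (-(u + v))) (Ioi 0) :=
  .of_integral_ne_zero <| by
    rw [integral_Ioi_rpow_mul_one_add_rpow hu hv]
    exact (div_pos (mul_pos (Gamma_pos_of_pos hu) (Gamma_pos_of_pos hv))
      (Gamma_pos_of_pos (add_pos hu hv))).ne'

lemma integrableOn_Ioi_zero_of_norm_le_rpow {f : ℝ → ℝ} {p q C₀ C₁ : ℝ}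
    (hf : AEStronglyMeasurable f (volume.restrict (Ioi 0))) (hp : -1 < p) (hq : q < -1)
    (h₀ : ∀ t ∈ Ioc 0 1, ‖f t‖ ≤ C₀ * t ^ p) (h₁ : ∀ t ∈ Ioi 1, ‖f t‖ ≤ C₁ * t ^ q) :
    IntegrableOn f (Ioi 0) := by
  rw [← Ioc_union_Ioi_eq_Ioi zero_le_one]
  refine IntegrableOn.union ?_ ?_
  · have hpow : IntegrableOn (fun t : ℝ => t ^ p) (Ioc 0 1) :=
      (intervalIntegrable_iff_integrableOn_Ioc_of_le zero_le_one).1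
        (intervalIntegral.intervalIntegrable_rpow' hp)
    exact (hpow.const_mul C₀).mono' (hf.mono_set Ioc_subset_Ioi_self)
      ((ae_restrict_iff' measurableSet_Ioc).2 (Eventually.of_forall h₀))
  · exact ((integrableOn_Ioi_rpow_of_lt hq one_pos).const_mul C₁).mono'
      (hf.mono_set (Ioi_subset_Ioi zero_le_one))
      ((ae_restrict_iff' measurableSet_Ioi).2 (Eventually.of_forall h₁))

lemma one_sub_one_add_rpow_neg_nonneg {β z : ℝ} (hβ : 0 ≤ β) (hz : 0 ≤ z) :
    0 ≤ 1 - (1 + z) ^ (-β) :=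
  sub_nonneg.2 (rpow_le_one_of_one_le_of_nonpos (by linarith) (by linarith))

lemma one_sub_one_add_rpow_neg_le_one {β z : ℝ} (hz : 0 ≤ z) : 1 - (1 + z) ^ (-β) ≤ 1 :=
  sub_le_self _ (rpow_nonneg (by linarith) _)

lemma one_sub_one_add_rpow_neg_le_mul {β z : ℝ} (hβ : 0 ≤ β) (hz : 0 ≤ z) :
    1 - (1 + z) ^ (-β) ≤ β * z := by
  have hlog : log (1 + z) ≤ z := by linarith [log_le_sub_one_of_pos (by linarith : 0 < 1 + z)]
  calc 1 - (1 + z) ^ (-β) = 1 - exp (-(β * log (1 + z))) := by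
        rw [rpow_def_of_pos (by linarith), mul_neg, mul_comm]
    _ ≤ β * log (1 + z) := by linarith [add_one_le_exp (-(β * log (1 + z)))]
    _ ≤ β * z := mul_le_mul_of_nonneg_left hlog hβ

lemma tendsto_one_sub_one_add_rpow_neg_mul_rpow_nhdsGT_zero {β p : ℝ} (hβ : 0 ≤ β)
    (hp : -1 < p) : Tendsto (fun z : ℝ => (1 - (1 + z) ^ (-β)) * z ^ p) (𝓝[>] 0) (𝓝 0) := by
  have hlim : Tendsto (fun z : ℝ => β * z ^ (p + 1)) (𝓝[>] 0) (𝓝 0) := by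
    have := ((continuousAt_rpow_const 0 (p + 1) (Or.inr (by linarith))).tendsto.const_mul β)
    rw [zero_rpow (by linarith), mul_zero] at this
    exact this.mono_left nhdsWithin_le_nhds
  refine squeeze_zero' ?_ ?_ hlim <;> filter_upwards [self_mem_nhdsWithin] with z (hz : 0 < z)
  · exact mul_nonneg (one_sub_one_add_rpow_neg_nonneg hβ hz.le) (rpow_nonneg hz.le _)
  · rw [rpow_add hz, rpow_one, mul_comm (z ^ p), ← mul_assoc]
    exact mul_le_mul_of_nonneg_right (one_sub_one_add_rpow_neg_le_mul hβ hz.le)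
      (rpow_nonneg hz.le _)

lemma tendsto_one_sub_one_add_rpow_neg_mul_rpow_atTop {β p : ℝ} (hβ : 0 ≤ β) (hp : p < 0) :
    Tendsto (fun z : ℝ => (1 - (1 + z) ^ (-β)) * z ^ p) atTop (𝓝 0) := by
  refine squeeze_zero' ?_ ?_ (by simpa using tendsto_rpow_neg_atTop (neg_pos.2 hp))
    <;> filter_upwards [eventually_ge_atTop 0] with z hz
  · exact mul_nonneg (one_sub_one_add_rpow_neg_nonneg hβ hz) (rpow_nonneg hz _)
  · exact mul_le_of_le_one_left (rpow_nonneg hz _) (one_sub_one_add_rpow_neg_le_one hz)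

lemma integrableOn_Ioi_one_sub_one_add_rpow_neg_mul_rpow {α β : ℝ} (hα₁ : 1 < α) (hα₂ : α < 2)
    (hβ : 0 ≤ β) : IntegrableOn (fun z : ℝ => (1 - (1 + z) ^ (-β)) * z ^ (-α)) (Ioi 0) := by
  refine integrableOn_Ioi_zero_of_norm_le_rpow (p := 1 - α) (q := -α) (C₀ := β) (C₁ := 1)
    (by fun_prop : Measurable _).aestronglyMeasurable (by linarith) (by linarith)
    (fun t ⟨ht, _⟩ => ?_) (fun t (ht : 1 < t) => ?_)
  · rw [norm_of_nonneg (mul_nonneg (one_sub_one_add_rpow_neg_nonneg hβ ht.le)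
      (rpow_nonneg ht.le _)), sub_eq_add_neg 1 α, rpow_add ht, rpow_one, ← mul_assoc]
    exact mul_le_mul_of_nonneg_right (one_sub_one_add_rpow_neg_le_mul hβ ht.le)
      (rpow_nonneg ht.le _)
  · have ht0 : 0 ≤ t := by linarith
    rw [norm_of_nonneg (mul_nonneg (one_sub_one_add_rpow_neg_nonneg hβ ht0) (rpow_nonneg ht0 _))]
    exact mul_le_mul_of_nonneg_right (one_sub_one_add_rpow_neg_le_one ht0) (rpow_nonneg ht0 _)

lemma integral_Ioi_one_sub_one_add_rpow_neg_mul_rpow {α β : ℝ} (hα₁ : 1 < α) (hα₂ : α < 2)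
    (hβ : 0 ≤ β) :
    ∫ z in Ioi (0 : ℝ), (1 - (1 + z) ^ (-β)) * z ^ (-α)
      = β * Gamma (2 - α) * Gamma (α + β - 1) / ((α - 1) * Gamma (β + 1)) := by
  set u : ℝ → ℝ := fun z => 1 - (1 + z) ^ (-β)
  set v : ℝ → ℝ := fun z => z ^ (1 - α) / (1 - α)
  have hu : ∀ z ∈ Ioi (0 : ℝ), HasDerivAt u (β * (1 + z) ^ (-β - 1)) z := fun z (hz : 0 < z) =>
    (((hasDerivAt_id' z).const_add 1).rpow_const (p := -β) (Or.inl (by positivity))).const_sub 1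
      |>.congr_deriv (by ring)
  have hv : ∀ z ∈ Ioi (0 : ℝ), HasDerivAt v (z ^ (-α)) z := fun z (hz : 0 < z) =>
    (hasDerivAt_rpow_const (p := 1 - α) (Or.inl hz.ne')).div_const (1 - α) |>.congr_deriv (by
      rw [sub_sub_cancel_left, mul_div_cancel_left₀ _ (by linarith)])
  have hJ := integrableOn_Ioi_rpow_mul_one_add_rpow (u := 2 - α) (v := α + β - 1)
    (by linarith) (by linarith)
  have huv' : IntegrableOn (u * fun z => z ^ (-α)) (Ioi 0) :=
    integrableOn_Ioi_one_sub_one_add_rpow_neg_mul_rpow hα₁ hα₂ hβ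
  have hu'v_eq : (fun z => β * (1 + z) ^ (-β - 1)) * v
      = fun z => β / (1 - α) * (z ^ (2 - α - 1) * (1 + z) ^ (-(2 - α + (α + β - 1)))) := by
    funext z
    simp only [Pi.mul_apply, v, show -(2 - α + (α + β - 1)) = -β - 1 by ring,
      show 2 - α - 1 = 1 - α by ring]
    ring
  have hu'v : IntegrableOn ((fun z => β * (1 + z) ^ (-β - 1)) * v) (Ioi 0) := by
    rw [hu'v_eq]
    exact hJ.const_mul _
  have h0 : Tendsto (u * v) (𝓝[>] 0) (𝓝 0) := by
    have := (tendsto_one_sub_one_add_rpow_neg_mul_rpow_nhdsGT_zero hβ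
      (p := 1 - α) (by linarith)).div_const (1 - α)
    rw [zero_div] at this
    exact this.congr fun z => mul_div_assoc _ _ _
  have htop : Tendsto (u * v) atTop (𝓝 0) := by
    have := (tendsto_one_sub_one_add_rpow_neg_mul_rpow_atTop hβ
      (p := 1 - α) (by linarith)).div_const (1 - α)
    rw [zero_div] at this
    exact this.congr fun z => mul_div_assoc _ _ _
  have hBeta : ∫ z in Ioi (0 : ℝ), β * (1 + z) ^ (-β - 1) * v z
      = β / (1 - α) * (Gamma (2 - α) * Gamma (α + β - 1) / Gamma (β + 1)) := by
    rw [← show 2 - α + (α + β - 1) = β + 1 by ring, ← integral_Ioi_rpow_mul_one_add_rpow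
      (by linarith) (by linarith), ← integral_const_mul]
    exact congrArg _ hu'v_eq
  rw [integral_Ioi_mul_deriv_eq_deriv_mul hu hv huv' hu'v h0 htop, hBeta]
  have : 1 - α ≠ 0 := by linarith
  have : α - 1 ≠ 0 := by linarith
  have : Gamma (β + 1) ≠ 0 := (Gamma_pos_of_pos (by linarith)).ne'
  field_simp
  ring

/-- Lemma 3.2, first identity: for `α ∈ (1,2)` and `β > 0`,
`∫_0^∞ [1 − (1+z)^{−β}] z μ_α(dz) = αβΓ(α+β−1)/(Γ(α)Γ(β+1))`, where
`μ_α(dz) = (α(α−1)/(Γ(α)Γ(2−α))) z^{−1−α} dz` on `(0,∞)`. -/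
theorem stable_measure_integral_one (α β : ℝ) (hα₁ : 1 < α) (hα₂ : α < 2) (hβ : 0 < β) :
    ∫ z in Ioi (0 : ℝ),
        (1 - (1 + z) ^ (-β)) * z *
          (α * (α - 1) / (Real.Gamma α * Real.Gamma (2 - α)) * z ^ (-1 - α))
      = α * β * Real.Gamma (α + β - 1) / (Real.Gamma α * Real.Gamma (β + 1)) := by
  set C := α * (α - 1) / (Gamma α * Gamma (2 - α)) with hC
  have hz : ∀ z ∈ Ioi (0 : ℝ), (1 - (1 + z) ^ (-β)) * z * (C * z ^ (-1 - α))
      = C * ((1 - (1 + z) ^ (-β)) * z ^ (-α)) := fun z (hz : 0 < z) => by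
    rw [sub_eq_add_neg (-1) α, rpow_add hz, rpow_neg_one]
    field_simp
  rw [setIntegral_congr_fun measurableSet_Ioi hz, integral_const_mul,
    integral_Ioi_one_sub_one_add_rpow_neg_mul_rpow hα₁ hα₂ hβ.le]
  have : Gamma α ≠ 0 := (Gamma_pos_of_pos (by linarith)).ne'
  have : Gamma (2 - α) ≠ 0 := (Gamma_pos_of_pos (by linarith)).ne'
  have : α - 1 ≠ 0 := by linarith
  rw [hC]
  field_simp
end

section
/- For all x, y > 0, ∫_0^∞ K¹_z g(x,y) μ_{α₁}(dz) = −(βδ(1−βδ)Γ(α₁−βδ)/(Γ(α₁)Γ(2−βδ))) x^{βδ−α₁} y^{−δ}. -/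
open MeasureTheory Set Real ProbabilityTheory
open scoped ENNReal

/-!
Only the term `x ^ s y ^ (-δ)`, `s = βδ ∈ (0, 1)`, contributes. Write the second-order Taylor
remainder of `t ↦ t ^ s` in integral form,
`x ^ s + s x ^ (s - 1) z - (x + z) ^ s = s (1 - s) ∫₀^z (x + w) ^ (s - 2) (z - w) dw ≥ 0`,
and exchange the `z`- and `w`-integrations by Tonelli. Both resulting integrals are beta integrals
of the second kind, `∫₀^∞ t ^ (a - 1) (x + t) ^ (-(a + b)) dt = x ^ (-b) B(a, b)`, which come from
the usual beta integral through `t = x u / (1 - u)`: the inner `z`-integral is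
`w ^ (1 - α) B(2, α - 1)` and the outer `w`-integral is then `x ^ (s - α) B(2 - α, α - s)`
(with `α = α₁`). Tonelli and both substitutions are applied to lower integrals of nonnegative
functions, so no integrability on `(0, ∞)` has to be checked.
-/

lemma lintegral_Ioo_rpow_mul_one_sub_rpow {a b : ℝ} (ha : 0 < a) (hb : 0 < b) :
    ∫⁻ u in Ioo 0 1, ENNReal.ofReal (u ^ (a - 1) * (1 - u) ^ (b - 1))
      = ENNReal.ofReal (beta a b) := by
  have hB := beta_pos ha hb
  have h := lintegral_betaPDF_eq_one ha hb
  simp_rw [lintegral_betaPDF, mul_assoc, ENNReal.ofReal_mul (one_div_pos.2 hB).le] at h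
  rw [lintegral_const_mul' _ _ ENNReal.ofReal_ne_top, mul_comm] at h
  rw [ENNReal.eq_inv_of_mul_eq_one_left h, ← ENNReal.ofReal_inv_of_pos (one_div_pos.2 hB),
    one_div, inv_inv]

section BetaSecondKind

variable {x : ℝ}

lemma image_mul_div_one_sub_Ioo (hx : 0 < x) :
    (fun u : ℝ => x * u / (1 - u)) '' Ioo 0 1 = Ioi 0 := by
  refine Subset.antisymm ?_ fun t (ht : 0 < t) => ?_
  · rintro _ ⟨u, ⟨hu0, hu1⟩, rfl⟩
    exact div_pos (mul_pos hx hu0) (by linarith)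
  · have hxt : 0 < x + t := by linarith
    refine ⟨t / (x + t), ⟨by positivity, (div_lt_one hxt).2 (by linarith)⟩, ?_⟩
    field_simp
    simp [hx.ne']

lemma injOn_mul_div_one_sub (hx : 0 < x) :
    InjOn (fun u : ℝ => x * u / (1 - u)) (Ioo 0 1) := by
  rintro u ⟨-, hu1⟩ v ⟨-, hv1⟩ h
  have h1u : 1 - u ≠ 0 := by linarith
  have h1v : 1 - v ≠ 0 := by linarith
  field_simp at h
  linarith

lemma hasDerivAt_mul_div_one_sub {u : ℝ} (hu : u ≠ 1) :
    HasDerivAt (fun u : ℝ => x * u / (1 - u)) (x / (1 - u) ^ 2) u := by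
  have h1u : 1 - u ≠ 0 := sub_ne_zero.2 (Ne.symm hu)
  exact (((hasDerivAt_id u).const_mul x).div ((hasDerivAt_id u).const_sub 1) h1u).congr_deriv
    (by simp only [id]; ring)

lemma lintegral_Ioi_rpow_mul_add_rpow (hx : 0 < x) {a b : ℝ} (ha : 0 < a) (hb : 0 < b) :
    ∫⁻ t in Ioi 0, ENNReal.ofReal (t ^ (a - 1) * (x + t) ^ (-(a + b)))
      = ENNReal.ofReal (x ^ (-b) * beta a b) := by
  rw [← image_mul_div_one_sub_Ioo hx, lintegral_image_eq_lintegral_abs_deriv_mul measurableSet_Ioo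
    (fun u hu => (hasDerivAt_mul_div_one_sub hu.2.ne).hasDerivWithinAt) (injOn_mul_div_one_sub hx),
    ENNReal.ofReal_mul (by positivity), ← lintegral_Ioo_rpow_mul_one_sub_rpow ha hb,
    ← lintegral_const_mul' _ _ ENNReal.ofReal_ne_top]
  refine setLIntegral_congr_fun measurableSet_Ioo fun u ⟨hu0, hu1⟩ => ?_
  rw [← ENNReal.ofReal_mul (by positivity), ← ENNReal.ofReal_mul (by positivity)]
  congr 1
  have h1u : 0 < 1 - u := by linarith
  have e : x + x * u / (1 - u) = x / (1 - u) := by field_simp; ring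
  rw [e, abs_of_pos (by positivity), div_rpow hx.le h1u.le, div_rpow (by positivity) h1u.le,
    mul_rpow hx.le hu0.le, div_eq_mul_inv _ ((1 - u) ^ (a - 1)),
    div_eq_mul_inv _ ((1 - u) ^ (-(a + b))), ← rpow_neg h1u.le, ← rpow_two, div_eq_mul_inv x,
    ← rpow_neg h1u.le, ← rpow_neg h1u.le, show -b = 1 + (a - 1) + -(a + b) by ring, rpow_add hx,
    rpow_add hx, rpow_one, show b - 1 = -2 + -(a - 1) + - -(a + b) by ring, rpow_add h1u,
    rpow_add h1u]
  ring

end BetaSecondKind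

lemma lintegral_Ioi_eq_lintegral_Ioi_const_add (w : ℝ) (g : ℝ → ℝ≥0∞) :
    ∫⁻ z in Ioi w, g z = ∫⁻ t in Ioi 0, g (w + t) := by
  have h := lintegral_image_eq_lintegral_abs_deriv_mul (measurableSet_Ioi (a := 0))
    (fun t _ => ((hasDerivAt_id t).const_add w).hasDerivWithinAt) (add_right_injective w).injOn g
  simpa using h

lemma lintegral_Ioi_lintegral_Ioo_swap {μ : Measure ℝ} [SFinite μ] {a : ℝ}
    {f : ℝ → ℝ → ℝ≥0∞} (hf : Measurable (Function.uncurry f)) :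
    ∫⁻ z in Ioi a, ∫⁻ w in Ioo a z, f z w ∂μ ∂μ = ∫⁻ w in Ioi a, ∫⁻ z in Ioi w, f z w ∂μ ∂μ := by
  set S : Set (ℝ × ℝ) := {p | a < p.2 ∧ p.2 < p.1}
  have hS : MeasurableSet S := (measurableSet_lt measurable_const measurable_snd).inter
    (measurableSet_lt measurable_snd measurable_fst)
  have hl : ∀ z, (Ioi a).indicator (fun z => ∫⁻ w in Ioo a z, f z w ∂μ) z
      = ∫⁻ w, S.indicator (Function.uncurry f) (z, w) ∂μ := by
    intro z
    by_cases hz : z ∈ Ioi a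
    · rw [indicator_of_mem hz, ← lintegral_indicator measurableSet_Ioo]
      rfl
    · have h0 : ∀ w, S.indicator (Function.uncurry f) (z, w) = 0 :=
        fun w => indicator_of_notMem (fun h => hz (h.1.trans h.2)) _
      simp [indicator_of_notMem hz, h0]
  have hr : ∀ w, (Ioi a).indicator (fun w => ∫⁻ z in Ioi w, f z w ∂μ) w
      = ∫⁻ z, S.indicator (Function.uncurry f) (z, w) ∂μ := by
    intro w
    by_cases hw : w ∈ Ioi a
    · rw [indicator_of_mem hw, ← lintegral_indicator measurableSet_Ioi]
      refine lintegral_congr fun z => ?_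
      simp [S, indicator, mem_Ioi.1 hw]
    · have h0 : ∀ z, S.indicator (Function.uncurry f) (z, w) = 0 :=
        fun z => indicator_of_notMem (fun h => hw h.1) _
      simp [indicator_of_notMem hw, h0]
  rw [← lintegral_indicator measurableSet_Ioi, ← lintegral_indicator measurableSet_Ioi]
  simp_rw [hl, hr]
  exact lintegral_lintegral_swap (hf.indicator hS).aemeasurable

lemma rpow_taylor_remainder_eq_integral {s x z : ℝ} (hs0 : s ≠ 0) (hs1 : s ≠ 1) (hx : 0 < x)
    (hz : 0 ≤ z) :
    s * (s - 1) * ∫ w in (0 : ℝ)..z, (x + w) ^ (s - 2) * (z - w)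
      = (x + z) ^ s - x ^ s - s * x ^ (s - 1) * z := by
  have hpos : ∀ w ∈ uIcc 0 z, 0 < x + w := fun w hw => by
    rw [uIcc_of_le hz] at hw; linarith [hw.1]
  have h0 : (0 : ℝ) ∉ uIcc x (x + z) := notMem_uIcc_of_lt hx (by linarith)
  have hcont : ∀ r : ℝ, IntervalIntegrable (fun w => (x + w) ^ r) volume 0 z := fun r =>
    (ContinuousOn.rpow_const (by fun_prop) fun w hw => Or.inl (hpos w hw).ne').intervalIntegrable
  have hA : ∫ w in (0 : ℝ)..z, (x + w) ^ (s - 2) = ((x + z) ^ (s - 1) - x ^ (s - 1)) / (s - 1) := by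
    rw [intervalIntegral.integral_comp_add_left (fun t => t ^ (s - 2)), add_zero,
      integral_rpow (Or.inr ⟨by contrapose! hs1; linarith, h0⟩), show s - 2 + 1 = s - 1 by ring]
  have hB : ∫ w in (0 : ℝ)..z, (x + w) ^ (s - 1) = ((x + z) ^ s - x ^ s) / s := by
    rw [intervalIntegral.integral_comp_add_left (fun t => t ^ (s - 1)), add_zero,
      integral_rpow (Or.inr ⟨by contrapose! hs0; linarith, h0⟩), sub_add_cancel]
  have hsplit : ∫ w in (0 : ℝ)..z, (x + w) ^ (s - 2) * (z - w)
      = ∫ w in (0 : ℝ)..z, ((x + z) * (x + w) ^ (s - 2) - (x + w) ^ (s - 1)) := by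
    refine intervalIntegral.integral_congr fun w hw => ?_
    simp only [show s - 1 = s - 2 + 1 by ring, rpow_add_one (hpos w hw).ne']
    ring
  rw [hsplit, intervalIntegral.integral_sub ((hcont _).const_mul _) (hcont _),
    intervalIntegral.integral_const_mul, hA, hB]
  have e1 : (x + z) * (x + z) ^ (s - 1) = (x + z) ^ s := by
    rw [mul_comm, ← rpow_add_one (by linarith), sub_add_cancel]
  have e2 : x * x ^ (s - 1) = x ^ s := by
    rw [mul_comm, ← rpow_add_one hx.ne', sub_add_cancel]
  have hs1' : s - 1 ≠ 0 := sub_ne_zero.2 hs1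
  field_simp
  linear_combination s * e1 - s * e2

lemma beta_two_left {a : ℝ} (ha : 0 < a) : beta 2 a = 1 / (a * (a + 1)) := by
  have hΓ : Gamma (a + 2) = (a + 1) * a * Gamma a := by
    rw [show a + 2 = a + 1 + 1 by ring, Gamma_add_one (by linarith), Gamma_add_one ha.ne',
      mul_assoc]
  rw [beta, add_comm, hΓ, Gamma_two, one_mul]
  field_simp [(Gamma_pos_of_pos ha).ne']

lemma lintegral_Ioi_sub_mul_rpow {α w : ℝ} (hα : 1 < α) (hw : 0 < w) :
    ∫⁻ z in Ioi w, ENNReal.ofReal ((z - w) * z ^ (-1 - α))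
      = ENNReal.ofReal (w ^ (1 - α) / ((α - 1) * α)) := by
  rw [lintegral_Ioi_eq_lintegral_Ioi_const_add w]
  have h := lintegral_Ioi_rpow_mul_add_rpow hw two_pos (sub_pos.2 hα)
  rw [beta_two_left (sub_pos.2 hα), sub_add_cancel, ← div_eq_mul_one_div, neg_sub] at h
  convert h using 3 with t
  norm_num [show -(2 + (α - 1)) = -1 - α by ring]

section TaylorRemainder

variable {s α x : ℝ}

lemma ofReal_rpow_taylor_remainder_eq_lintegral (hs0 : 0 < s) (hs1 : s < 1) (hx : 0 < x)
    {z : ℝ} (hz : 0 < z) :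
    ENNReal.ofReal ((x ^ s + s * x ^ (s - 1) * z - (x + z) ^ s) * z ^ (-1 - α))
      = ∫⁻ w in Ioo 0 z,
          ENNReal.ofReal (s * (1 - s) * (x + w) ^ (s - 2) * ((z - w) * z ^ (-1 - α))) := by
  have hint : IntegrableOn
      (fun w => s * (1 - s) * (x + w) ^ (s - 2) * ((z - w) * z ^ (-1 - α))) (Ioo 0 z) := by
    refine (ContinuousOn.integrableOn_Icc ?_).mono_set Ioo_subset_Icc_self
    refine (continuousOn_const.mul (ContinuousOn.rpow_const (by fun_prop) fun w hw =>
      Or.inl ?_)).mul (by fun_prop)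
    linarith [hw.1]
  have hnn : 0 ≤ᵐ[volume.restrict (Ioo 0 z)]
      fun w => s * (1 - s) * (x + w) ^ (s - 2) * ((z - w) * z ^ (-1 - α)) := by
    refine ae_restrict_of_forall_mem measurableSet_Ioo fun w ⟨hw0, hwz⟩ => ?_
    positivity
  rw [← ofReal_integral_eq_lintegral_ofReal hint hnn, ← integral_Ioc_eq_integral_Ioo,
    ← intervalIntegral.integral_of_le hz.le]
  have hfactor : ∫ w in 0..z, s * (1 - s) * (x + w) ^ (s - 2) * ((z - w) * z ^ (-1 - α))
      = -(z ^ (-1 - α) * (s * (s - 1) * ∫ w in 0..z, (x + w) ^ (s - 2) * (z - w))) := by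
    rw [← intervalIntegral.integral_const_mul, ← intervalIntegral.integral_const_mul,
      ← intervalIntegral.integral_neg]
    congr 1 with w
    ring
  rw [hfactor, rpow_taylor_remainder_eq_integral hs0.ne' hs1.ne hx hz.le]
  congr 1
  ring

lemma lintegral_Ioi_rpow_taylor_remainder (hs0 : 0 < s) (hs1 : s < 1) (hα1 : 1 < α)
    (hα2 : α < 2) (hx : 0 < x) :
    ∫⁻ z in Ioi 0, ENNReal.ofReal ((x ^ s + s * x ^ (s - 1) * z - (x + z) ^ s) * z ^ (-1 - α))
      = ENNReal.ofReal (s * (1 - s) / ((α - 1) * α)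
          * (x ^ (s - α) * beta (2 - α) (α - s))) := by
  have hmeas : Measurable (Function.uncurry fun z w : ℝ =>
      ENNReal.ofReal (s * (1 - s) * (x + w) ^ (s - 2) * ((z - w) * z ^ (-1 - α)))) := by
    fun_prop
  calc _ = ∫⁻ z in Ioi 0, ∫⁻ w in Ioo 0 z,
        ENNReal.ofReal (s * (1 - s) * (x + w) ^ (s - 2) * ((z - w) * z ^ (-1 - α))) :=
        setLIntegral_congr_fun measurableSet_Ioi fun z hz =>
          ofReal_rpow_taylor_remainder_eq_lintegral hs0 hs1 hx hz
    _ = ∫⁻ w in Ioi 0, ∫⁻ z in Ioi w,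
        ENNReal.ofReal (s * (1 - s) * (x + w) ^ (s - 2) * ((z - w) * z ^ (-1 - α))) :=
        lintegral_Ioi_lintegral_Ioo_swap hmeas
    _ = ∫⁻ w in Ioi 0, ENNReal.ofReal (s * (1 - s) / ((α - 1) * α))
        * ENNReal.ofReal (w ^ ((2 - α) - 1) * (x + w) ^ (-((2 - α) + (α - s)))) := by
      refine setLIntegral_congr_fun measurableSet_Ioi fun w (hw : 0 < w) => ?_
      simp_rw [ENNReal.ofReal_mul (by positivity : 0 ≤ s * (1 - s) * (x + w) ^ (s - 2))]
      rw [lintegral_const_mul' _ _ ENNReal.ofReal_ne_top, lintegral_Ioi_sub_mul_rpow hα1 hw,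
        ← ENNReal.ofReal_mul (by positivity), ← ENNReal.ofReal_mul (by positivity)]
      congr 1
      rw [show 2 - α - 1 = 1 - α by ring, show -(2 - α + (α - s)) = s - 2 by ring]
      ring
    _ = _ := by
      rw [lintegral_const_mul' _ _ ENNReal.ofReal_ne_top,
        lintegral_Ioi_rpow_mul_add_rpow hx (by linarith) (by linarith),
        ← ENNReal.ofReal_mul (by positivity), neg_sub]

lemma integral_Ioi_rpow_taylor_remainder (hs0 : 0 < s) (hs1 : s < 1) (hα1 : 1 < α)
    (hα2 : α < 2) (hx : 0 < x) :
    ∫ z in Ioi 0, ((x + z) ^ s - x ^ s - s * x ^ (s - 1) * z) * z ^ (-1 - α)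
      = -(s * (1 - s) / ((α - 1) * α)
          * (x ^ (s - α) * beta (2 - α) (α - s))) := by
  have hnn : 0 ≤ᵐ[volume.restrict (Ioi 0)]
      fun z => (x ^ s + s * x ^ (s - 1) * z - (x + z) ^ s) * z ^ (-1 - α) := by
    refine ae_restrict_of_forall_mem measurableSet_Ioi fun z (hz : 0 < z) => ?_
    have hI : 0 ≤ ∫ w in 0..z, (x + w) ^ (s - 2) * (z - w) :=
      intervalIntegral.integral_nonneg hz.le fun w hw =>
        mul_nonneg (rpow_nonneg (by linarith [hw.1]) _) (by linarith [hw.2])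
    have h := rpow_taylor_remainder_eq_integral hs0.ne' hs1.ne hx hz.le
    have : 0 ≤ x ^ s + s * x ^ (s - 1) * z - (x + z) ^ s := by
      nlinarith [mul_nonneg (mul_nonneg hs0.le (sub_nonneg.2 hs1.le)) hI]
    positivity
  have hB := beta_pos (by linarith : 0 < 2 - α) (by linarith : 0 < α - s)
  have hneg : ∀ z, ((x + z) ^ s - x ^ s - s * x ^ (s - 1) * z) * z ^ (-1 - α)
      = -((x ^ s + s * x ^ (s - 1) * z - (x + z) ^ s) * z ^ (-1 - α)) := fun z => by ring
  simp_rw [hneg, integral_neg]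
  rw [integral_eq_lintegral_of_nonneg_ae hnn (by fun_prop),
    lintegral_Ioi_rpow_taylor_remainder hs0 hs1 hα1 hα2 hx, ENNReal.toReal_ofReal]
  positivity

end TaylorRemainder

theorem K1_integral_eq_general (α₁ β δ ρ : ℝ) (hα₁ : 1 < α₁) (hα₂ : α₁ < 2)
    (hβ : 0 < β) (hδ₀ : 0 < δ) (hδ : δ < 1 / β)
    (x y : ℝ) (hx : 0 < x) :
    ∫ z in Ioi (0 : ℝ),
        ((x + z) ^ (β * δ) * y ^ (-δ) + y ^ ρ - (x ^ (β * δ) * y ^ (-δ) + y ^ ρ)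
            - deriv (fun x' : ℝ => x' ^ (β * δ) * y ^ (-δ) + y ^ ρ) x * z) *
          (α₁ * (α₁ - 1) / (Real.Gamma α₁ * Real.Gamma (2 - α₁)) * z ^ (-1 - α₁))
      = -(β * δ * (1 - β * δ) * Real.Gamma (α₁ - β * δ)
            / (Real.Gamma α₁ * Real.Gamma (2 - β * δ))) * x ^ (β * δ - α₁) * y ^ (-δ) := by
  set s := β * δ
  have hs0 : 0 < s := mul_pos hβ hδ₀
  have hs1 : s < 1 := by rwa [lt_div_iff₀' hβ] at hδ
  have hderiv : deriv (fun x' : ℝ => x' ^ s * y ^ (-δ) + y ^ ρ) x = s * x ^ (s - 1) * y ^ (-δ) :=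
    (((hasDerivAt_rpow_const (Or.inl hx.ne')).mul_const _).add_const _).deriv
  calc
    _ = y ^ (-δ) * (α₁ * (α₁ - 1) / (Gamma α₁ * Gamma (2 - α₁)))
        * ∫ z in Ioi 0, ((x + z) ^ s - x ^ s - s * x ^ (s - 1) * z) * z ^ (-1 - α₁) := by
      rw [← integral_const_mul, hderiv]
      congr 1 with z
      ring
    _ = _ := by
      rw [integral_Ioi_rpow_taylor_remainder hs0 hs1 hα₁ hα₂ hx, beta,
        show 2 - α₁ + (α₁ - s) = 2 - s by ring]
      have : Gamma (2 - α₁) ≠ 0 := (Gamma_pos_of_pos (by linarith)).ne'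
      have : α₁ - 1 ≠ 0 := by linarith
      field_simp

/-- Lemma 3.10, identity (3.33): for `g(x,y) = x^{βδ} y^{−δ} + y^ρ` and
`K¹_z g(x,y) = g(x+z,y) − g(x,y) − ∂_x g(x,y) z`, for all `x, y > 0`,
`∫_0^∞ K¹_z g(x,y) μ_{α₁}(dz)
  = −(βδ(1−βδ)Γ(α₁−βδ)/(Γ(α₁)Γ(2−βδ))) x^{βδ−α₁} y^{−δ}`. -/
theorem K1_integral_eq (α₁ β δ ρ : ℝ) (hα₁ : 1 < α₁) (hα₂ : α₁ < 2)
    (hβ : 0 < β) (hδ₀ : 0 < δ) (hδ : δ < 1 / β) (hρ₀ : 0 < ρ) (hρ : ρ < 1)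
    (x y : ℝ) (hx : 0 < x) (hy : 0 < y) :
    ∫ z in Ioi (0 : ℝ),
        ((x + z) ^ (β * δ) * y ^ (-δ) + y ^ ρ - (x ^ (β * δ) * y ^ (-δ) + y ^ ρ)
            - deriv (fun x' : ℝ => x' ^ (β * δ) * y ^ (-δ) + y ^ ρ) x * z) *
          (α₁ * (α₁ - 1) / (Real.Gamma α₁ * Real.Gamma (2 - α₁)) * z ^ (-1 - α₁))
      = -(β * δ * (1 - β * δ) * Real.Gamma (α₁ - β * δ)
            / (Real.Gamma α₁ * Real.Gamma (2 - β * δ))) * x ^ (β * δ - α₁) * y ^ (-δ) :=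
  K1_integral_eq_general α₁ β δ ρ hα₁ hα₂ hβ hδ₀ hδ x y hx
end

section
/- For all x, y > 0, ∫_0^∞ K²_z g(x,y) μ_{α₂}(dz) = (δ(δ+1)Γ(α₂+δ)/(Γ(α₂)Γ(δ+2))) x^{βδ} y^{−δ−α₂} − (ρ(1−ρ)Γ(α₂−ρ)/(Γ(α₂)Γ(2−ρ))) y^{ρ−α₂}. -/
/-! `K²_z` is linear in `g`, so it suffices to integrate `K²_z` of `y ↦ y ^ s` (`s ≤ 1`),
`R z = (y + z) ^ s - y ^ s - s y ^ (s - 1) z`, against `z ^ (-1 - α) dz`. Integrating by parts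
twice, with boundary terms killed by `R = O(z²)`, `R' = O(z)` at `0` and `R = O(z)`, `R' = O(1)`
at `∞`, gives `s (s - 1) / (α (α - 1)) ∫ z ^ (1 - α) (y + z) ^ (s - 2) dz`, and the substitution
`z = y v / (1 - v)` turns this into the beta integral `y ^ (s - α) B(2 - α, α - s)`. -/

open MeasureTheory Set Real Filter Topology ProbabilityTheory

theorem integral_Ioo_rpow_mul_one_sub_rpow_s9 {a b : ℝ} (ha : 0 < a) (hb : 0 < b) :
    ∫ v in Ioo (0 : ℝ) 1, v ^ (a - 1) * (1 - v) ^ (b - 1) = beta a b := by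
  have h : Complex.betaIntegral a b
      = ((∫ v in (0 : ℝ)..1, v ^ (a - 1) * (1 - v) ^ (b - 1) : ℝ) : ℂ) := by
    rw [Complex.betaIntegral, ← intervalIntegral.integral_ofReal]
    refine intervalIntegral.integral_congr fun v hv => ?_
    rw [uIcc_of_le zero_le_one] at hv
    rw [Complex.ofReal_mul, Complex.ofReal_cpow hv.1, Complex.ofReal_cpow (sub_nonneg.2 hv.2)]
    push_cast
    rfl
  rw [Complex.betaIntegral_eq_Gamma_mul_div _ _ (by simpa) (by simpa), ← Complex.ofReal_add,
    Complex.Gamma_ofReal, Complex.Gamma_ofReal, Complex.Gamma_ofReal] at h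
  rw [← integral_Ioc_eq_integral_Ioo, ← intervalIntegral.integral_of_le zero_le_one, beta]
  exact_mod_cast h.symm

theorem integral_Ioi_rpow_mul_add_rpow {a b y : ℝ} (ha : 0 < a) (hb : 0 < b) (hy : 0 < y) :
    ∫ t in Ioi (0 : ℝ), t ^ (a - 1) * (y + t) ^ (-a - b) = y ^ (-b) * beta a b := by
  set φ : ℝ → ℝ := fun v => y * v / (1 - v)
  have hφ : φ '' Ioo 0 1 = Ioi 0 := by
    ext t
    refine ⟨?_, fun ht => ⟨t / (y + t), ⟨?_, ?_⟩, ?_⟩⟩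
    · rintro ⟨v, ⟨hv₀, hv₁⟩, rfl⟩
      exact div_pos (mul_pos hy hv₀) (sub_pos.2 hv₁)
    · exact div_pos ht (add_pos hy ht)
    · exact (div_lt_one (add_pos hy ht)).2 (lt_add_of_pos_left t hy)
    · have : y + t ≠ 0 := (add_pos hy (mem_Ioi.1 ht)).ne'
      simp only [φ]
      rw [one_sub_div this, add_sub_cancel_right]
      field_simp
  have hφ' : ∀ v ∈ Ioo (0 : ℝ) 1, HasDerivWithinAt φ (y / (1 - v) ^ 2) (Ioo 0 1) v := by
    intro v hv
    have h := ((hasDerivAt_id v).const_mul y).div ((hasDerivAt_id v).const_sub 1)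
      (sub_pos.2 hv.2).ne'
    refine (h.congr_deriv ?_).hasDerivWithinAt
    simp only [id]
    ring
  have hinj : InjOn φ (Ioo 0 1) := by
    intro v hv w hw h
    simp only [φ] at h
    rw [div_eq_div_iff (sub_pos.2 hv.2).ne' (sub_pos.2 hw.2).ne'] at h
    nlinarith
  rw [← hφ, integral_image_eq_integral_abs_deriv_smul measurableSet_Ioo hφ' hinj,
    ← integral_Ioo_rpow_mul_one_sub_rpow_s9 ha hb, ← integral_const_mul]
  refine setIntegral_congr_fun measurableSet_Ioo fun v ⟨hv₀, hv₁⟩ => ?_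
  have hw : 0 < 1 - v := sub_pos.2 hv₁
  have hyφ : y + φ v = y / (1 - v) := by simp only [φ]; field_simp; ring
  simp only [smul_eq_mul, hyφ, φ]
  rw [abs_of_pos (by positivity), div_rpow (by positivity) hw.le, div_rpow hy.le hw.le,
    mul_rpow hy.le hv₀.le]
  have hY : y ^ (a - 1) * y ^ (-a - b) * y = y ^ (-b) := by
    rw [← rpow_add hy, ← rpow_add_one hy.ne']; ring_nf
  have hW : (1 - v) ^ (b - 1) * ((1 - v) ^ (a - 1) * (1 - v) ^ (-a - b) * (1 - v) ^ 2) = 1 := by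
    rw [← rpow_add hw, ← rpow_two, ← rpow_add hw, ← rpow_add hw]; ring_nf; exact rpow_zero _
  rw [← hY]
  field_simp
  linear_combination -hW

theorem abs_mul_rpow_le_of_abs_le {w C a z : ℝ} (r : ℝ) (hz : 0 < z)
    (h : |w| ≤ C * z ^ a) : |w * z ^ r| ≤ C * z ^ (a + r) := by
  rw [abs_mul, abs_of_pos (rpow_pos_of_pos hz r), rpow_add hz, ← mul_assoc]
  exact mul_le_mul_of_nonneg_right h (rpow_pos_of_pos hz r).le

theorem integrableOn_Ioi_of_abs_le_rpow {f : ℝ → ℝ} {C₀ C₁ a b : ℝ}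
    (hf : ContinuousOn f (Ioi 0)) (h₀ : ∀ z ∈ Ioc (0 : ℝ) 1, |f z| ≤ C₀ * z ^ a) (ha : -1 < a)
    (h₁ : ∀ z ∈ Ioi (1 : ℝ), |f z| ≤ C₁ * z ^ b) (hb : b < -1) :
    IntegrableOn f (Ioi 0) := by
  rw [← Ioc_union_Ioi_eq_Ioi zero_le_one]
  refine IntegrableOn.union ?_ ?_
  · have hg : IntegrableOn (fun z : ℝ => C₀ * z ^ a) (Ioc 0 1) :=
      ((intervalIntegral.intervalIntegrable_rpow' ha).1).const_mul C₀
    refine hg.mono' ((hf.mono Ioc_subset_Ioi_self).aestronglyMeasurable measurableSet_Ioc) ?_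
    filter_upwards [ae_restrict_mem measurableSet_Ioc] with z hz using h₀ z hz
  · have hg : IntegrableOn (fun z : ℝ => C₁ * z ^ b) (Ioi 1) :=
      (integrableOn_Ioi_rpow_of_lt hb one_pos).const_mul C₁
    refine hg.mono' ((hf.mono (Ioi_subset_Ioi zero_le_one)).aestronglyMeasurable
      measurableSet_Ioi) ?_
    filter_upwards [ae_restrict_mem measurableSet_Ioi] with z hz using h₁ z hz

theorem integral_Ioi_mul_rpow_eq_of_abs_le {u u' : ℝ → ℝ} {p q a b C₀ C₁ : ℝ}
    (hp : p = q - 1) (hq : q ≠ 0) (hu : ∀ z ∈ Ioi (0 : ℝ), HasDerivAt u (u' z) z)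
    (hu' : IntegrableOn (fun z => u' z * z ^ q) (Ioi 0))
    (h₀ : ∀ z ∈ Ioc (0 : ℝ) 1, |u z| ≤ C₀ * z ^ a) (ha : 0 < a + q)
    (h₁ : ∀ z ∈ Ioi (1 : ℝ), |u z| ≤ C₁ * z ^ b) (hb : b + q < 0) :
    IntegrableOn (fun z => u z * z ^ p) (Ioi 0) ∧
      ∫ z in Ioi 0, u z * z ^ p = -q⁻¹ * ∫ z in Ioi 0, u' z * z ^ q := by
  subst hp
  have hcont : ContinuousOn (fun z => u z * z ^ (q - 1)) (Ioi 0) := fun z hz =>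
    ((hu z hz).continuousAt.mul (continuousAt_rpow_const z (q - 1) (Or.inl (ne_of_gt hz))))
      |>.continuousWithinAt
  have hint : IntegrableOn (fun z => u z * z ^ (q - 1)) (Ioi 0) :=
    integrableOn_Ioi_of_abs_le_rpow hcont
      (fun z hz => abs_mul_rpow_le_of_abs_le (q - 1) hz.1 (h₀ z hz)) (by linarith)
      (fun z hz => abs_mul_rpow_le_of_abs_le (q - 1) (one_pos.trans hz) (h₁ z hz)) (by linarith)
  have hv : ∀ z ∈ Ioi (0 : ℝ), HasDerivAt (fun z => z ^ q / q) (z ^ (q - 1)) z := fun z hz => by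
    simpa [hq] using (hasDerivAt_rpow_const (p := q) (Or.inl (ne_of_gt hz))).div_const q
  have h_zero : Tendsto (fun z => u z * z ^ q) (𝓝[>] 0) (𝓝 0) := by
    have hlim : Tendsto (fun z : ℝ => C₀ * z ^ (a + q)) (𝓝[>] 0) (𝓝 0) := by
      simpa [zero_rpow ha.ne'] using ((continuousAt_rpow_const 0 (a + q) (Or.inr ha.le)).tendsto
        |>.mono_left nhdsWithin_le_nhds).const_mul C₀
    refine squeeze_zero_norm' ?_ hlim
    filter_upwards [Ioc_mem_nhdsGT one_pos] with z hz
    exact abs_mul_rpow_le_of_abs_le q hz.1 (h₀ z hz)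
  have h_infty : Tendsto (fun z => u z * z ^ q) atTop (𝓝 0) := by
    have hlim : Tendsto (fun z : ℝ => C₁ * z ^ (b + q)) atTop (𝓝 0) := by
      simpa using (tendsto_rpow_neg_atTop (neg_pos.2 hb)).const_mul C₁
    refine squeeze_zero_norm' ?_ hlim
    filter_upwards [eventually_gt_atTop 1] with z hz
    exact abs_mul_rpow_le_of_abs_le q (one_pos.trans hz) (h₁ z hz)
  refine ⟨hint, ?_⟩
  have hu'v : IntegrableOn (fun z => u' z * (z ^ q / q)) (Ioi 0) := by
    have h := hu'.div_const q
    simp only [mul_div_assoc] at h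
    exact h
  rw [integral_Ioi_mul_deriv_eq_deriv_mul hu hv hint hu'v
    (by simpa only [Pi.mul_def, mul_div_assoc, zero_div] using h_zero.div_const q)
    (by simpa only [Pi.mul_def, mul_div_assoc, zero_div] using h_infty.div_const q)]
  simp_rw [← mul_div_assoc, integral_div]
  ring

noncomputable def rpowTaylorRemainder (s y z : ℝ) : ℝ := (y + z) ^ s - y ^ s - s * y ^ (s - 1) * z

noncomputable def rpowIncrement (r y z : ℝ) : ℝ := (y + z) ^ r - y ^ r

theorem hasDerivAt_rpowIncrement (r : ℝ) {y t : ℝ} (h : 0 < y + t) :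
    HasDerivAt (rpowIncrement r y) (r * (y + t) ^ (r - 1)) t := by
  have h := ((hasDerivAt_id t).const_add y).rpow_const (p := r) (Or.inl h.ne')
  exact (h.sub_const (y ^ r)).congr_deriv (by simp)

theorem hasDerivAt_rpowTaylorRemainder (s : ℝ) {y t : ℝ} (h : 0 < y + t) :
    HasDerivAt (rpowTaylorRemainder s y) (s * rpowIncrement (s - 1) y t) t := by
  have h := (hasDerivAt_rpowIncrement s h).sub ((hasDerivAt_id t).const_mul (s * y ^ (s - 1)))
  exact h.congr_deriv (by simp only [rpowIncrement]; ring)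

theorem abs_rpowIncrement_le_mul {y z r : ℝ} (hy : 0 < y) (hz : 0 ≤ z) (hr : r ≤ 1) :
    |rpowIncrement r y z| ≤ |r| * y ^ (r - 1) * z := by
  have h := norm_image_sub_le_of_norm_deriv_le_segment' (f := rpowIncrement r y) (a := 0)
    (b := z) (C := |r| * y ^ (r - 1))
    (fun t ht => (hasDerivAt_rpowIncrement r (by linarith [ht.1])).hasDerivWithinAt)
    (fun t ht => ?_) z (right_mem_Icc.2 hz)
  · simpa [rpowIncrement] using h
  · rw [Real.norm_eq_abs, abs_mul, abs_of_pos (rpow_pos_of_pos (by linarith [ht.1]) _)]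
    exact mul_le_mul_of_nonneg_left
      (rpow_le_rpow_of_nonpos hy (by linarith [ht.1]) (by linarith)) (abs_nonneg r)

theorem abs_rpowIncrement_le {y z r : ℝ} (hy : 0 < y) (hz : 0 ≤ z) (hr : r ≤ 0) :
    |rpowIncrement r y z| ≤ y ^ r := by
  have h₀ : 0 < (y + z) ^ r := rpow_pos_of_pos (by linarith) r
  have h₁ : (y + z) ^ r ≤ y ^ r := rpow_le_rpow_of_nonpos hy (by linarith) hr
  rw [rpowIncrement, abs_le]
  constructor <;> linarith

theorem abs_rpowTaylorRemainder_le {y z s M : ℝ} (hy : 0 < y) (hz : 0 ≤ z)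
    (hM : ∀ t ∈ Icc 0 z, |rpowIncrement (s - 1) y t| ≤ M) :
    |rpowTaylorRemainder s y z| ≤ |s| * M * z := by
  have h := norm_image_sub_le_of_norm_deriv_le_segment' (f := rpowTaylorRemainder s y)
    (C := |s| * M)
    (fun t ht => (hasDerivAt_rpowTaylorRemainder s (by linarith [ht.1])).hasDerivWithinAt)
    (fun t ht => by
      rw [Real.norm_eq_abs, abs_mul]
      exact mul_le_mul_of_nonneg_left (hM t (Ico_subset_Icc_self ht)) (abs_nonneg s))
    z (right_mem_Icc.2 hz)
  simpa [rpowTaylorRemainder] using h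

theorem integral_rpowIncrement_mul_rpow {α s y : ℝ} (hα₁ : 1 < α) (hα₂ : α < 2) (hs : s ≤ 1)
    (hy : 0 < y) :
    IntegrableOn (fun z => rpowIncrement (s - 1) y z * z ^ (-α)) (Ioi 0) ∧
      ∫ z in Ioi 0, rpowIncrement (s - 1) y z * z ^ (-α)
        = (s - 1) / (α - 1) * beta (2 - α) (α - s) * y ^ (s - α) := by
  have hbeta : ∫ z in Ioi 0, z ^ (1 - α) * (y + z) ^ (s - 1 - 1)
      = y ^ (s - α) * beta (2 - α) (α - s) := by
    convert integral_Ioi_rpow_mul_add_rpow (a := 2 - α) (b := α - s) (by linarith)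
      (by linarith) hy using 5 <;> ring
  have hint : IntegrableOn (fun z => z ^ (1 - α) * (y + z) ^ (s - 1 - 1)) (Ioi 0) :=
    .of_integral_ne_zero <| by
      rw [hbeta]
      exact (mul_pos (rpow_pos_of_pos hy _) (beta_pos (by linarith) (by linarith))).ne'
  have hfun : (fun z => (s - 1) * (y + z) ^ (s - 1 - 1) * z ^ (1 - α))
      = fun z => (s - 1) * (z ^ (1 - α) * (y + z) ^ (s - 1 - 1)) := funext fun z => by ring
  have hR_le_mul : ∀ z, 0 ≤ z → |rpowIncrement (s - 1) y z| ≤ |s - 1| * y ^ (s - 1 - 1) * z :=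
    fun z hz => abs_rpowIncrement_le_mul hy hz (by linarith)
  have hR_le : ∀ z, 0 ≤ z → |rpowIncrement (s - 1) y z| ≤ y ^ (s - 1) :=
    fun z hz => abs_rpowIncrement_le hy hz (by linarith)
  obtain ⟨hint₁, h₁⟩ := integral_Ioi_mul_rpow_eq_of_abs_le (u := rpowIncrement (s - 1) y)
    (p := -α) (q := 1 - α) (a := 1) (b := 0) (C₀ := |s - 1| * y ^ (s - 1 - 1))
    (C₁ := y ^ (s - 1)) (by ring) (by linarith)
    (fun z hz => hasDerivAt_rpowIncrement (s - 1) (by linarith [mem_Ioi.1 hz]))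
    (by rw [hfun]; exact hint.const_mul _)
    (fun z hz => by simpa using hR_le_mul z hz.1.le) (by linarith)
    (fun z hz => by simpa using hR_le z (by linarith [mem_Ioi.1 hz])) (by linarith)
  refine ⟨hint₁, ?_⟩
  rw [h₁, hfun, integral_const_mul, hbeta]
  have : 1 - α ≠ 0 := by linarith
  have : α - 1 ≠ 0 := by linarith
  field_simp
  ring

theorem integral_rpowTaylorRemainder_mul_rpow {α s y : ℝ} (hα₁ : 1 < α) (hα₂ : α < 2)
    (hs : s ≤ 1) (hy : 0 < y) :
    IntegrableOn (fun z => rpowTaylorRemainder s y z * z ^ (-1 - α)) (Ioi 0) ∧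
      ∫ z in Ioi 0, rpowTaylorRemainder s y z * z ^ (-1 - α)
        = s * (s - 1) / (α * (α - 1)) * beta (2 - α) (α - s) * y ^ (s - α) := by
  obtain ⟨hint₁, h₁⟩ := integral_rpowIncrement_mul_rpow hα₁ hα₂ hs hy
  have hR_le_sq : ∀ z, 0 ≤ z →
      |rpowTaylorRemainder s y z| ≤ |s| * (|s - 1| * y ^ (s - 1 - 1)) * z ^ 2 := fun z hz => by
    rw [sq, ← mul_assoc, mul_assoc |s|]
    exact abs_rpowTaylorRemainder_le hy hz fun t ht =>
      (abs_rpowIncrement_le_mul hy ht.1 (by linarith)).trans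
        (mul_le_mul_of_nonneg_left ht.2 (by positivity))
  have hR_le_mul : ∀ z, 0 ≤ z → |rpowTaylorRemainder s y z| ≤ |s| * y ^ (s - 1) * z :=
    fun z hz => abs_rpowTaylorRemainder_le hy hz fun t ht =>
      abs_rpowIncrement_le hy ht.1 (by linarith)
  obtain ⟨hint₂, h₂⟩ := integral_Ioi_mul_rpow_eq_of_abs_le (u := rpowTaylorRemainder s y)
    (u' := fun z => s * rpowIncrement (s - 1) y z) (p := -1 - α) (q := -α) (a := 2) (b := 1)
    (by ring) (by linarith)
    (fun z hz => hasDerivAt_rpowTaylorRemainder s (by linarith [mem_Ioi.1 hz]))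
    (by have h := hint₁.const_mul s; simp only [← mul_assoc] at h; exact h)
    (fun z hz => by simpa using hR_le_sq z hz.1.le) (by linarith)
    (fun z hz => by simpa using hR_le_mul z (by linarith [mem_Ioi.1 hz])) (by linarith)
  refine ⟨hint₂, ?_⟩
  simp only [h₂, mul_assoc, integral_const_mul]
  rw [h₁]
  have : α ≠ 0 := by linarith
  have : α - 1 ≠ 0 := by linarith
  field_simp

theorem K2_integral_eq_general (α₂ β δ ρ : ℝ) (hα₁ : 1 < α₂) (hα₂ : α₂ < 2)
    (hδ₀ : 0 < δ) (hρ : ρ < 1)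
    (x y : ℝ) (hy : 0 < y) :
    ∫ z in Ioi (0 : ℝ),
        (x ^ (β * δ) * (y + z) ^ (-δ) + (y + z) ^ ρ - (x ^ (β * δ) * y ^ (-δ) + y ^ ρ)
            - deriv (fun y' : ℝ => x ^ (β * δ) * y' ^ (-δ) + y' ^ ρ) y * z) *
          (α₂ * (α₂ - 1) / (Real.Gamma α₂ * Real.Gamma (2 - α₂)) * z ^ (-1 - α₂))
      = δ * (δ + 1) * Real.Gamma (α₂ + δ) / (Real.Gamma α₂ * Real.Gamma (δ + 2))
            * x ^ (β * δ) * y ^ (-δ - α₂)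
          - ρ * (1 - ρ) * Real.Gamma (α₂ - ρ) / (Real.Gamma α₂ * Real.Gamma (2 - ρ))
            * y ^ (ρ - α₂) := by
  set A := x ^ (β * δ)
  set c := α₂ * (α₂ - 1) / (Gamma α₂ * Gamma (2 - α₂))
  have hderiv : deriv (fun y' : ℝ => A * y' ^ (-δ) + y' ^ ρ) y
      = A * (-δ * y ^ (-δ - 1)) + ρ * y ^ (ρ - 1) :=
    (((hasDerivAt_rpow_const (Or.inl hy.ne')).const_mul A).add
      (hasDerivAt_rpow_const (Or.inl hy.ne'))).deriv
  have hsplit : ∀ z, (A * (y + z) ^ (-δ) + (y + z) ^ ρ - (A * y ^ (-δ) + y ^ ρ)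
        - deriv (fun y' : ℝ => A * y' ^ (-δ) + y' ^ ρ) y * z) * (c * z ^ (-1 - α₂))
      = c * A * (rpowTaylorRemainder (-δ) y z * z ^ (-1 - α₂))
        + c * (rpowTaylorRemainder ρ y z * z ^ (-1 - α₂)) := fun z => by
    rw [hderiv, rpowTaylorRemainder, rpowTaylorRemainder]; ring
  obtain ⟨hint₁, h₁⟩ :=
    integral_rpowTaylorRemainder_mul_rpow (s := -δ) hα₁ hα₂ (by linarith) hy
  obtain ⟨hint₂, h₂⟩ := integral_rpowTaylorRemainder_mul_rpow (s := ρ) hα₁ hα₂ hρ.le hy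
  simp_rw [hsplit]
  rw [integral_add (hint₁.const_mul _) (hint₂.const_mul _), integral_const_mul,
    integral_const_mul, h₁, h₂, beta, beta, sub_neg_eq_add,
    show 2 - α₂ + (α₂ + δ) = δ + 2 by ring, show 2 - α₂ + (α₂ - ρ) = 2 - ρ by ring]
  have : α₂ - 1 ≠ 0 := by linarith
  have := (Gamma_pos_of_pos (by linarith : 0 < α₂)).ne'
  have := (Gamma_pos_of_pos (by linarith : 0 < 2 - α₂)).ne'
  have := (Gamma_pos_of_pos (by linarith : 0 < δ + 2)).ne'
  have := (Gamma_pos_of_pos (by linarith : 0 < 2 - ρ)).ne'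
  simp only [c]
  field_simp
  ring

/-- Lemma 3.10, identity (3.34): for `g(x,y) = x^{βδ} y^{−δ} + y^ρ` and
`K²_z g(x,y) = g(x,y+z) − g(x,y) − ∂_y g(x,y) z`, for all `x, y > 0`,
`∫_0^∞ K²_z g(x,y) μ_{α₂}(dz)
  = (δ(δ+1)Γ(α₂+δ)/(Γ(α₂)Γ(δ+2))) x^{βδ} y^{−δ−α₂}
      − (ρ(1−ρ)Γ(α₂−ρ)/(Γ(α₂)Γ(2−ρ))) y^{ρ−α₂}`. -/
theorem K2_integral_eq (α₂ β δ ρ : ℝ) (hα₁ : 1 < α₂) (hα₂ : α₂ < 2)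
    (hβ : 0 < β) (hδ₀ : 0 < δ) (hδ : δ < 1 / β) (hρ₀ : 0 < ρ) (hρ : ρ < 1)
    (x y : ℝ) (hx : 0 < x) (hy : 0 < y) :
    ∫ z in Ioi (0 : ℝ),
        (x ^ (β * δ) * (y + z) ^ (-δ) + (y + z) ^ ρ - (x ^ (β * δ) * y ^ (-δ) + y ^ ρ)
            - deriv (fun y' : ℝ => x ^ (β * δ) * y' ^ (-δ) + y' ^ ρ) y * z) *
          (α₂ * (α₂ - 1) / (Real.Gamma α₂ * Real.Gamma (2 - α₂)) * z ^ (-1 - α₂))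
      = δ * (δ + 1) * Real.Gamma (α₂ + δ) / (Real.Gamma α₂ * Real.Gamma (δ + 2))
            * x ^ (β * δ) * y ^ (-δ - α₂)
          - ρ * (1 - ρ) * Real.Gamma (α₂ - ρ) / (Real.Gamma α₂ * Real.Gamma (2 - ρ))
            * y ^ (ρ - α₂) :=
  K2_integral_eq_general α₂ β δ ρ hα₁ hα₂ hδ₀ hρ x y hy
end

section
/- Assume p < κ₂ q/(q + 1 − θ₂). Then there exist constants β, ρ, σ₀, ε₀, z* > 0 and 0 < δ < β^{−1} such that for all 0 < σ < σ₀ and all x, y with 0 < x, y ≤ ε₀ and y x^{−β} ≥ z*, one has H̃_σ(x,y) > 0. -/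
/-!
With `β = κ₂ / (q + 1 - θ₂)` one has `β (θ₂ - 1) + κ₂ = β q`, so on the region `x ^ β ≤ y` the
term `η₂ y ^ (θ₂ - 1) x ^ κ₂` is at most `η₂ x ^ (β q - p) x ^ p`. As `p < β q`, it is absorbed by
`β a (1 - σ) x ^ p` for small `x`, and the bracket is at least `(β a / 4) x ^ p - (3 b / 2) y ^ q`.
Where this is negative, `x ^ p ≲ y ^ q`; combined with `x ^ β ≤ y` this bounds the weight
`x ^ (β δ) y ^ (-δ)` by a multiple of `y ^ (2 ρ)` for some `ρ > 0`, so the negative part is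
dominated by `b ρ (1 - σ) y ^ (ρ + q)` once `y` is small.
-/

open Real Filter Topology

lemma eventually_mul_rpow_le (c : ℝ) {e t : ℝ} (he : 0 < e) (ht : 0 < t) :
    ∀ᶠ ε in 𝓝[>] (0 : ℝ), c * ε ^ e ≤ t := by
  have h : Tendsto (fun ε : ℝ => c * ε ^ e) (𝓝 0) (𝓝 (c * 0 ^ e)) :=
    ((continuousAt_rpow_const 0 e (Or.inr he.le)).const_mul c).tendsto
  rw [zero_rpow he.ne', mul_zero] at h
  exact nhdsWithin_le_nhds (h.eventually (ge_mem_nhds ht))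

lemma rpow_le_of_one_le_mul_rpow_neg {x y β : ℝ} (hx : 0 < x) (h : 1 ≤ y * x ^ (-β)) :
    x ^ β ≤ y := by
  rwa [rpow_neg hx.le, ← div_eq_mul_inv, one_le_div (rpow_pos_of_pos hx β)] at h

lemma rpow_mul_rpow_le_of_rpow_le {x y β r κ : ℝ} (hx : 0 < x) (hxy : x ^ β ≤ y)
    (hr : r ≤ 0) : y ^ r * x ^ κ ≤ x ^ (β * r + κ) := by
  rw [rpow_add hx, rpow_mul hx.le]
  exact mul_le_mul_of_nonneg_right (rpow_le_rpow_of_nonpos (rpow_pos_of_pos hx β) hxy hr)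
    (rpow_pos_of_pos hx κ).le

lemma rpow_mul_rpow_neg_le {x y β δ p q s K : ℝ} (hx : 0 < x) (hy : 0 < y) (hβ : 0 < β)
    (hs : 0 ≤ s) (hps : p * s ≤ β * δ) (hxy : x ^ β ≤ y) (hK : x ^ p ≤ K * y ^ q) :
    x ^ (β * δ) * y ^ (-δ) ≤ K ^ s * y ^ (s * (q - p / β)) := by
  have hK0 : 0 ≤ K := nonneg_of_mul_nonneg_left ((rpow_pos_of_pos hx p).le.trans hK)
    (rpow_pos_of_pos hy q)
  have hexp : 0 ≤ δ - p * s / β := by rw [sub_nonneg, div_le_iff₀ hβ]; linarith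
  calc x ^ (β * δ) * y ^ (-δ)
      = (x ^ β) ^ (δ - p * s / β) * (x ^ p) ^ s * y ^ (-δ) := by
        rw [← rpow_mul hx.le, ← rpow_mul hx.le, ← rpow_add hx]
        field_simp
        ring_nf
    _ ≤ y ^ (δ - p * s / β) * (K * y ^ q) ^ s * y ^ (-δ) := by gcongr
    _ = K ^ s * y ^ (s * (q - p / β)) := by
        rw [mul_rpow hK0 (rpow_pos_of_pos hy q).le, ← rpow_mul hy.le]
        rw [show s * (q - p / β) = (δ - p * s / β) + q * s + -δ by ring, rpow_add hy,
          rpow_add hy]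
        ring

lemma bracket_lower_bound {a b η₁ η₂ κ₁ κ₂ p q θ₁ θ₂ β σ ε x y : ℝ}
    (ha : 0 ≤ a) (hb : 0 ≤ b) (hη₁ : 0 ≤ η₁) (hη₂ : 0 ≤ η₂) (hβ : 0 ≤ β) (hσ : σ ≤ 1 / 2)
    (hθ₂ : θ₂ < 1) (hβθ : β * (θ₂ - 1) + κ₂ = β * q) (hpβq : p ≤ β * q)
    (hx : 0 < x) (hy : 0 < y) (hxy : x ^ β ≤ y) (hxε : x ≤ ε)
    (hε : η₂ * ε ^ (β * q - p) ≤ β * a / 4) :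
    β * a / 4 * x ^ p - 3 / 2 * b * y ^ q ≤
      β * a * (1 - σ) * x ^ p - (1 + σ) * b * y ^ q
        + β * η₁ * x ^ (θ₁ - 1) * y ^ κ₁ - η₂ * y ^ (θ₂ - 1) * x ^ κ₂ := by
  have habsorb : η₂ * (y ^ (θ₂ - 1) * x ^ κ₂) ≤ β * a / 4 * x ^ p := calc
    η₂ * (y ^ (θ₂ - 1) * x ^ κ₂) ≤ η₂ * x ^ (β * q) := by
      rw [← hβθ]; gcongr; exact rpow_mul_rpow_le_of_rpow_le hx hxy (by linarith)
    _ = η₂ * x ^ (β * q - p) * x ^ p := by rw [mul_assoc, ← rpow_add hx, sub_add_cancel]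
    _ ≤ η₂ * ε ^ (β * q - p) * x ^ p := by gcongr
    _ ≤ β * a / 4 * x ^ p := by gcongr
  have hη₁term : 0 ≤ β * η₁ * x ^ (θ₁ - 1) * y ^ κ₁ := by positivity
  have hdrift : β * a * (1 / 2) * x ^ p ≤ β * a * (1 - σ) * x ^ p := by gcongr; linarith
  have hdecay : (1 + σ) * b * y ^ q ≤ 3 / 2 * b * y ^ q := by gcongr; linarith
  linarith

lemma neg_le_weight_mul_of_le {A C E β δ ρ p q s ε x y B : ℝ} (hA : 0 < A) (hδ : 0 ≤ δ)
    (hE : 0 ≤ E) (hβ : 0 < β) (hs : 0 ≤ s) (hps : p * s ≤ β * δ)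
    (hρ : s * (q - p / β) = 2 * ρ) (hρ0 : 0 ≤ ρ) (hx : 0 < x) (hy : 0 < y) (hxy : x ^ β ≤ y)
    (hyε : y ≤ ε)
    (hε : δ * C * (C / A) ^ s * ε ^ ρ ≤ E) (hB : A * x ^ p - C * y ^ q ≤ B) :
    -(E * y ^ (ρ + q)) ≤ δ * (x ^ (β * δ) * y ^ (-δ)) * B := by
  have hw : 0 ≤ δ * (x ^ (β * δ) * y ^ (-δ)) := by positivity
  rcases le_or_gt (C * y ^ q) (A * x ^ p) with hgood | hbad
  · have : 0 ≤ δ * (x ^ (β * δ) * y ^ (-δ)) * B := mul_nonneg hw (by linarith)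
    have : 0 ≤ E * y ^ (ρ + q) := by positivity
    linarith
  have hxp : 0 < x ^ p := rpow_pos_of_pos hx p
  have hC : 0 < C :=
    pos_of_mul_pos_left ((mul_pos hA hxp).trans hbad) (rpow_pos_of_pos hy q).le
  have hK : x ^ p ≤ C / A * y ^ q := by
    rw [div_mul_eq_mul_div, le_div_iff₀ hA]; linarith
  have hweight := rpow_mul_rpow_neg_le hx hy hβ hs hps hxy hK
  rw [hρ] at hweight
  have hneg : -(C * y ^ q) ≤ B := by linarith [mul_pos hA hxp]
  calc -(E * y ^ (ρ + q))
      ≤ -(δ * C * (C / A) ^ s * ε ^ ρ * y ^ (ρ + q)) := by gcongr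
    _ ≤ -(δ * C * (C / A) ^ s * y ^ ρ * y ^ (ρ + q)) := by gcongr
    _ = -(δ * ((C / A) ^ s * y ^ (2 * ρ)) * (C * y ^ q)) := by
        rw [two_mul, rpow_add hy, rpow_add hy]; ring
    _ ≤ -(δ * (x ^ (β * δ) * y ^ (-δ)) * (C * y ^ q)) := by gcongr
    _ ≤ δ * (x ^ (β * δ) * y ^ (-δ)) * B := by
        have := mul_le_mul_of_nonneg_left hneg hw; linarith
theorem Htilde_pos_case_iia_general (a b η₁ η₂ κ₁ κ₂ p q θ₁ θ₂ : ℝ)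
    (ha : 0 < a) (hb : 0 < b) (hη₁ : 0 < η₁) (hη₂ : 0 < η₂)
    (hκ₂ : 0 < κ₂) (hp : 0 ≤ p) (hq : 0 ≤ q)
    (hθ₂' : θ₂ < 1)
    (hcond : p < κ₂ * q / (q + 1 - θ₂)) :
    ∃ β ρ σ₀ ε₀ zstar δ : ℝ,
      0 < β ∧ 0 < ρ ∧ 0 < σ₀ ∧ 0 < ε₀ ∧ 0 < zstar ∧ 0 < δ ∧ δ < β⁻¹ ∧
      ∀ σ : ℝ, 0 < σ → σ < σ₀ → ∀ x y : ℝ,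
        0 < x → x ≤ ε₀ → 0 < y → y ≤ ε₀ → y * x ^ (-β) ≥ zstar →
        0 < δ * (x ^ (β * δ) * y ^ (-δ)) *
              (β * a * (1 - σ) * x ^ p - (1 + σ) * b * y ^ q
                + β * η₁ * x ^ (θ₁ - 1) * y ^ κ₁ - η₂ * y ^ (θ₂ - 1) * x ^ κ₂)
            + b * ρ * (1 - σ) * y ^ (ρ + q) + ρ * η₂ * y ^ (ρ + θ₂ - 1) * x ^ κ₂ := by
  have hqθ : 0 < q + 1 - θ₂ := by linarith
  set β := κ₂ / (q + 1 - θ₂)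
  have hβ : 0 < β := div_pos hκ₂ hqθ
  have hβθ : β * (θ₂ - 1) + κ₂ = β * q := by simp only [β]; field_simp; ring
  have hpβq : p < β * q := by simpa only [β, div_mul_eq_mul_div] using hcond
  set δ := β⁻¹ / 2
  set s := 1 / (2 * (p + 1))
  have hps : p * s ≤ β * δ := by
    rw [show β * δ = 1 / 2 by simp only [δ]; field_simp, mul_one_div,
      div_le_div_iff₀ (by positivity) two_pos]
    linarith
  set ρ := s * (q - p / β) / 2
  have hρ : 0 < ρ := by
    have : 0 < q - p / β := by rwa [sub_pos, div_lt_iff₀ hβ, mul_comm]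
    positivity
  set K := 3 / 2 * b / (β * a / 4)
  obtain ⟨ε, ⟨hε₁, hε₂⟩, hε⟩ := (((eventually_mul_rpow_le η₂ (sub_pos.2 hpβq)
      (by positivity : 0 < β * a / 4)).and (eventually_mul_rpow_le (δ * (3 / 2 * b) * K ^ s) hρ
        (by positivity : 0 < b * ρ / 2))).and self_mem_nhdsWithin).exists
  refine ⟨β, ρ, 1 / 2, ε, 1, δ, hβ, hρ, one_half_pos, hε, one_pos, by positivity,
    half_lt_self (inv_pos.2 hβ), ?_⟩
  intro σ _ hσ x y hx hxε hy hyε hz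
  have hxy : x ^ β ≤ y := rpow_le_of_one_le_mul_rpow_neg hx hz
  have hbracket := bracket_lower_bound (θ₁ := θ₁) (κ₁ := κ₁) ha.le hb.le hη₁.le hη₂.le hβ.le
    hσ.le hθ₂' hβθ hpβq.le hx hy hxy hxε hε₁
  have hweighted := neg_le_weight_mul_of_le (by positivity) (by positivity) (by positivity) hβ
    (by positivity) hps (by ring) hρ.le hx hy hxy hyε hε₂ hbracket
  have hdecay : b * ρ / 2 * y ^ (ρ + q) ≤ b * ρ * (1 - σ) * y ^ (ρ + q) := by
    gcongr; nlinarith [mul_pos hb hρ]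
  have hlast : 0 < ρ * η₂ * y ^ (ρ + θ₂ - 1) * x ^ κ₂ := by positivity
  linarith

/-- Lemma 3.11 (case (iia)): there exist `β, ρ, σ₀, ε₀, z* > 0` and `0 < δ < β⁻¹`
such that for all `0 < σ < σ₀`, `0 < x, y ≤ ε₀` with `y x^(−β) ≥ z*`, one has
`H̃_σ(x,y) := δ x^(βδ) y^(−δ) [βa(1−σ)x^p − (1+σ)b y^q + βη₁ x^(θ₁−1) y^(κ₁)
  − η₂ y^(θ₂−1) x^(κ₂)] + bρ(1−σ) y^(ρ+q) + ρη₂ y^(ρ+θ₂−1) x^(κ₂) > 0`. -/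
theorem Htilde_pos_case_iia (a b η₁ η₂ κ₁ κ₂ p q θ₁ θ₂ : ℝ)
    (ha : 0 < a) (hb : 0 < b) (hη₁ : 0 < η₁) (hη₂ : 0 < η₂)
    (hκ₁ : 0 < κ₁) (hκ₂ : 0 < κ₂) (hp : 0 ≤ p) (hq : 0 ≤ q)
    (hθ₁ : 1 ≤ θ₁) (hθ₂ : 0 ≤ θ₂) (hθ₂' : θ₂ < 1)
    (hcond : p < κ₂ * q / (q + 1 - θ₂)) :
    ∃ β ρ σ₀ ε₀ zstar δ : ℝ,
      0 < β ∧ 0 < ρ ∧ 0 < σ₀ ∧ 0 < ε₀ ∧ 0 < zstar ∧ 0 < δ ∧ δ < β⁻¹ ∧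
      ∀ σ : ℝ, 0 < σ → σ < σ₀ → ∀ x y : ℝ,
        0 < x → x ≤ ε₀ → 0 < y → y ≤ ε₀ → y * x ^ (-β) ≥ zstar →
        0 < δ * (x ^ (β * δ) * y ^ (-δ)) *
              (β * a * (1 - σ) * x ^ p - (1 + σ) * b * y ^ q
                + β * η₁ * x ^ (θ₁ - 1) * y ^ κ₁ - η₂ * y ^ (θ₂ - 1) * x ^ κ₂)
            + b * ρ * (1 - σ) * y ^ (ρ + q) + ρ * η₂ * y ^ (ρ + θ₂ - 1) * x ^ κ₂ :=
  Htilde_pos_case_iia_general a b η₁ η₂ κ₁ κ₂ p q θ₁ θ₂ ha hb hη₁ hη₂ hκ₂ hp hq hθ₂' hcond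
end

section
/- Assume θ₁ − 1 < κ₂(q − κ₁)/(q + 1 − θ₂). Then there exist constants β, ρ, σ₀, ε₀, z* > 0 and 0 < δ < β^{−1} such that for all 0 < σ < σ₀ and all x, y with 0 < x, y ≤ ε₀ and y x^{−β} ≥ z*, one has H̃_σ(x,y) > 0. -/
/-!
Choose `β` with `β (κ₁ + 1 - θ₂) = κ₂ - (θ₁ - 1)`. On the region `y ≥ z* x^β` this exponent
balance lets `β η₁ x^(θ₁-1) y^κ₁` absorb `η₂ y^(θ₂-1) x^κ₂` once `z*` is large. The remaining
negative term `δ (1+σ) b x^(βδ) y^(q-δ)` is dominated by a weighted geometric mean of the two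
outer terms of `H̃_σ`; the hypothesis on `θ₁ - 1` is exactly what makes `β (q + 1 - θ₂) > κ₂`,
so that this geometric mean carries a surplus factor `y^(-ρ)` which beats every constant
for `y ≤ ε₀`. The term `β a (1-σ) x^p` then gives strict positivity.
-/

open Real

lemma exists_pos_le_mul_rpow {A B L : ℝ} (hB : 0 < B) (hL : 0 < L) :
    ∃ z > 0, A ≤ B * z ^ L :=
  (((tendsto_rpow_atTop hL).const_mul_atTop hB).eventually_ge_atTop A
    |>.and (Filter.eventually_gt_atTop 0)).exists.imp fun _ h => ⟨h.2, h.1⟩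

lemma exists_pos_forall_one_add_mul_rpow_le {k c d μ ρ : ℝ} (hk : 0 < k) (hc : 0 < c)
    (hd : 0 < d) (hμ : 0 ≤ μ) (hρ : 0 < ρ) :
    ∃ ε > 0, ∀ σ y, σ < 1 / 2 → 0 ≤ y → y ≤ ε →
      k * (1 + σ) * y ^ ρ ≤ (c * (1 - σ)) ^ μ * d ^ (1 - μ) := by
  refine ⟨((c / 2) ^ μ * d ^ (1 - μ) / (2 * k)) ^ ρ⁻¹, by positivity,
    fun σ y hσ hy hyε => ?_⟩
  have hyρ : y ^ ρ ≤ (c / 2) ^ μ * d ^ (1 - μ) / (2 * k) :=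
    (rpow_le_rpow hy hyε hρ.le).trans_eq (rpow_inv_rpow (by positivity) hρ.ne')
  calc k * (1 + σ) * y ^ ρ ≤ 2 * k * y ^ ρ := by
        nlinarith [mul_nonneg hk.le (rpow_nonneg hy ρ)]
    _ ≤ (c / 2) ^ μ * d ^ (1 - μ) := by
        rwa [le_div_iff₀ (by positivity), mul_comm] at hyρ
    _ ≤ (c * (1 - σ)) ^ μ * d ^ (1 - μ) := by gcongr; nlinarith

lemma mul_rpow_mul_rpow_le_of_mul_rpow_le {x y z β L A B u v : ℝ} (hx : 0 < x) (hy : 0 < y)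
    (hz : 0 ≤ z) (hL : 0 ≤ L) (hB : 0 ≤ B) (hAB : A ≤ B * z ^ L) (hxy : z * x ^ β ≤ y) :
    A * y ^ v * x ^ (u + β * L) ≤ B * x ^ u * y ^ (v + L) := by
  have hxβ : 0 ≤ x ^ β := (rpow_pos_of_pos hx β).le
  have key : A * (x ^ β) ^ L ≤ B * y ^ L :=
    calc A * (x ^ β) ^ L ≤ B * z ^ L * (x ^ β) ^ L := by gcongr
      _ = B * (z * x ^ β) ^ L := by rw [mul_rpow hz hxβ, mul_assoc]
      _ ≤ B * y ^ L := by gcongr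
  calc A * y ^ v * x ^ (u + β * L) = x ^ u * y ^ v * (A * (x ^ β) ^ L) := by
        rw [rpow_add hx, rpow_mul hx.le]; ring
    _ ≤ x ^ u * y ^ v * (B * y ^ L) := by gcongr
    _ = B * x ^ u * y ^ (v + L) := by rw [rpow_add hy]; ring

lemma mul_rpow_mul_rpow_le_add {x y c d k μ m n κ r s : ℝ} (hx : 0 < x) (hy : 0 < y)
    (hμ₀ : 0 ≤ μ) (hμ₁ : μ ≤ 1) (hc : 0 ≤ c) (hd : 0 ≤ d)
    (hk : k * y ^ r ≤ c ^ μ * d ^ (1 - μ)) (hmn : m * μ + n * (1 - μ) = s - r) :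
    k * x ^ (κ * (1 - μ)) * y ^ s ≤ c * y ^ m + d * y ^ n * x ^ κ := by
  have hC : 0 ≤ c * y ^ m := by positivity
  have hD : 0 ≤ d * y ^ n * x ^ κ := by positivity
  have hs : y ^ s = y ^ r * y ^ (s - r) := by rw [← rpow_add hy, add_sub_cancel]
  calc k * x ^ (κ * (1 - μ)) * y ^ s
        = k * y ^ r * (y ^ (s - r) * x ^ (κ * (1 - μ))) := by rw [hs]; ring
    _ ≤ c ^ μ * d ^ (1 - μ) * (y ^ (s - r) * x ^ (κ * (1 - μ))) := by gcongr
    _ = (c * y ^ m) ^ μ * (d * y ^ n * x ^ κ) ^ (1 - μ) := by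
          rw [mul_rpow hc (by positivity), mul_rpow (by positivity) (by positivity),
            mul_rpow hd (by positivity), ← rpow_mul hy.le, ← rpow_mul hy.le,
            ← rpow_mul hx.le, ← hmn, rpow_add hy]
          ring
    _ ≤ μ * (c * y ^ m) + (1 - μ) * (d * y ^ n * x ^ κ) :=
          geom_mean_le_arith_mean2_weighted hμ₀ (by linarith) hC hD (by ring)
    _ ≤ c * y ^ m + d * y ^ n * x ^ κ := by nlinarith

lemma exists_exponents_case_iic {κ₁ κ₂ q θ₁ θ₂ : ℝ} (hκ₁ : 0 < κ₁) (hκ₂ : 0 < κ₂) (hq : 0 ≤ q)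
    (hθ₂ : θ₂ < 1) (hcond : θ₁ - 1 < κ₂ * (q - κ₁) / (q + 1 - θ₂)) :
    ∃ β δ ρ μ : ℝ, 0 < β ∧ 0 < δ ∧ δ < β⁻¹ ∧ 0 < ρ ∧ 0 ≤ μ ∧ μ ≤ 1 ∧
      β * (κ₁ + 1 - θ₂) = κ₂ - (θ₁ - 1) ∧ κ₂ * (1 - μ) = β * δ ∧
      (ρ + q) * μ + (ρ + θ₂ - 1) * (1 - μ) = q - δ - ρ := by
  have hD : 0 < q + 1 - θ₂ := by linarith
  have hL : 0 < κ₁ + 1 - θ₂ := by linarith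
  have hcond' := (lt_div_iff₀ hD).mp hcond
  set β := (κ₂ - (θ₁ - 1)) / (κ₁ + 1 - θ₂)
  have hβL : β * (κ₁ + 1 - θ₂) = κ₂ - (θ₁ - 1) := div_mul_cancel₀ _ hL.ne'
  have hβD : κ₂ < β * (q + 1 - θ₂) := by
    rw [div_mul_eq_mul_div, lt_div_iff₀ hL]; linarith
  have hβ : 0 < β := by nlinarith
  -- `t` is the value of `β * δ`
  obtain ⟨t, ht, ht₁, htκ⟩ : ∃ t : ℝ, 0 < t ∧ t < 1 ∧ t ≤ κ₂ / 2 :=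
    ⟨min 1 κ₂ / 2, by positivity, by linarith [min_le_left 1 κ₂],
      by linarith [min_le_right 1 κ₂]⟩
  refine ⟨β, t / β, t / β * (β * (q + 1 - θ₂) - κ₂) / (2 * κ₂), 1 - t / κ₂, hβ,
    by positivity, ?_, div_pos (mul_pos (by positivity) (by linarith)) (by positivity),
    ?_, ?_, hβL, ?_, ?_⟩
  · rw [inv_eq_one_div]; gcongr
  · rw [sub_nonneg, div_le_one hκ₂]; linarith
  · linarith [div_pos ht hκ₂]
  · field_simp; ring
  · field_simp; ring

theorem Htilde_pos_case_iic_general (a b η₁ η₂ κ₁ κ₂ p q θ₁ θ₂ : ℝ)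
    (ha : 0 < a) (hb : 0 < b) (hη₁ : 0 < η₁) (hη₂ : 0 < η₂)
    (hκ₁ : 0 < κ₁) (hκ₂ : 0 < κ₂) (hq : 0 ≤ q)
    (hθ₂' : θ₂ < 1)
    (hcond : θ₁ - 1 < κ₂ * (q - κ₁) / (q + 1 - θ₂)) :
    ∃ β ρ σ₀ ε₀ zstar δ : ℝ,
      0 < β ∧ 0 < ρ ∧ 0 < σ₀ ∧ 0 < ε₀ ∧ 0 < zstar ∧ 0 < δ ∧ δ < β⁻¹ ∧
      ∀ σ : ℝ, 0 < σ → σ < σ₀ → ∀ x y : ℝ,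
        0 < x → x ≤ ε₀ → 0 < y → y ≤ ε₀ → y * x ^ (-β) ≥ zstar →
        0 < δ * (x ^ (β * δ) * y ^ (-δ)) *
              (β * a * (1 - σ) * x ^ p - (1 + σ) * b * y ^ q
                + β * η₁ * x ^ (θ₁ - 1) * y ^ κ₁ - η₂ * y ^ (θ₂ - 1) * x ^ κ₂)
            + b * ρ * (1 - σ) * y ^ (ρ + q) + ρ * η₂ * y ^ (ρ + θ₂ - 1) * x ^ κ₂ := by
  obtain ⟨β, δ, ρ, μ, hβ, hδ, hδβ, hρ, hμ₀, hμ₁, hβL, hμx, hμy⟩ :=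
    exists_exponents_case_iic hκ₁ hκ₂ hq hθ₂' hcond
  obtain ⟨zstar, hz, hzL⟩ :=
    exists_pos_le_mul_rpow (A := η₂) (mul_pos hβ hη₁) (by linarith : 0 < κ₁ + 1 - θ₂)
  obtain ⟨ε₀, hε, hεk⟩ := exists_pos_forall_one_add_mul_rpow_le (mul_pos hδ hb)
    (mul_pos hb hρ) (mul_pos hρ hη₂) hμ₀ hρ
  refine ⟨β, ρ, 1 / 2, ε₀, zstar, δ, hβ, hρ, one_half_pos, hε, hz, hδ, hδβ, ?_⟩
  intro σ _ hσ x y hx _ hy hyε hzxy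
  have hxy : zstar * x ^ β ≤ y := by
    rwa [rpow_neg hx.le, ge_iff_le, ← div_eq_mul_inv, le_div_iff₀ (rpow_pos_of_pos hx β)] at hzxy
  have hη : η₂ * y ^ (θ₂ - 1) * x ^ κ₂ ≤ β * η₁ * x ^ (θ₁ - 1) * y ^ κ₁ := by
    have := mul_rpow_mul_rpow_le_of_mul_rpow_le (u := θ₁ - 1) (v := θ₂ - 1) hx hy hz.le
      (by linarith) (mul_pos hβ hη₁).le hzL hxy
    rwa [hβL, add_sub_cancel, show θ₂ - 1 + (κ₁ + 1 - θ₂) = κ₁ by ring] at this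
  have hbq : δ * (x ^ (β * δ) * y ^ (-δ)) * ((1 + σ) * b * y ^ q)
      ≤ b * ρ * (1 - σ) * y ^ (ρ + q) + ρ * η₂ * y ^ (ρ + θ₂ - 1) * x ^ κ₂ := by
    have := mul_rpow_mul_rpow_le_add (κ := κ₂) hx hy hμ₀ hμ₁
      (by nlinarith [mul_pos hb hρ]) (mul_pos hρ hη₂).le (hεk σ y hσ hy.le hyε) hμy
    rw [hμx, sub_eq_neg_add q δ, rpow_add hy] at this
    linarith
  have hP : 0 < δ * (x ^ (β * δ) * y ^ (-δ)) := by positivity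
  have hT : 0 < β * a * (1 - σ) * x ^ p := by
    have : 0 < 1 - σ := by linarith
    positivity
  nlinarith [mul_le_mul_of_nonneg_left hη hP.le, mul_pos hP hT]

/-- Lemma 3.11 (case (iic)): there exist `β, ρ, σ₀, ε₀, z* > 0` and `0 < δ < β⁻¹`
such that for all `0 < σ < σ₀`, `0 < x, y ≤ ε₀` with `y x^(−β) ≥ z*`, one has
`H̃_σ(x,y) := δ x^(βδ) y^(−δ) [βa(1−σ)x^p − (1+σ)b y^q + βη₁ x^(θ₁−1) y^(κ₁)
  − η₂ y^(θ₂−1) x^(κ₂)] + bρ(1−σ) y^(ρ+q) + ρη₂ y^(ρ+θ₂−1) x^(κ₂) > 0`. -/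
theorem Htilde_pos_case_iic (a b η₁ η₂ κ₁ κ₂ p q θ₁ θ₂ : ℝ)
    (ha : 0 < a) (hb : 0 < b) (hη₁ : 0 < η₁) (hη₂ : 0 < η₂)
    (hκ₁ : 0 < κ₁) (hκ₂ : 0 < κ₂) (hp : 0 ≤ p) (hq : 0 ≤ q)
    (hθ₁ : 1 ≤ θ₁) (hθ₂ : 0 ≤ θ₂) (hθ₂' : θ₂ < 1)
    (hcond : θ₁ - 1 < κ₂ * (q - κ₁) / (q + 1 - θ₂)) :
    ∃ β ρ σ₀ ε₀ zstar δ : ℝ,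
      0 < β ∧ 0 < ρ ∧ 0 < σ₀ ∧ 0 < ε₀ ∧ 0 < zstar ∧ 0 < δ ∧ δ < β⁻¹ ∧
      ∀ σ : ℝ, 0 < σ → σ < σ₀ → ∀ x y : ℝ,
        0 < x → x ≤ ε₀ → 0 < y → y ≤ ε₀ → y * x ^ (-β) ≥ zstar →
        0 < δ * (x ^ (β * δ) * y ^ (-δ)) *
              (β * a * (1 - σ) * x ^ p - (1 + σ) * b * y ^ q
                + β * η₁ * x ^ (θ₁ - 1) * y ^ κ₁ - η₂ * y ^ (θ₂ - 1) * x ^ κ₂)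
            + b * ρ * (1 - σ) * y ^ (ρ + q) + ρ * η₂ * y ^ (ρ + θ₂ - 1) * x ^ κ₂ :=
  Htilde_pos_case_iic_general a b η₁ η₂ κ₁ κ₂ p q θ₁ θ₂ ha hb hη₁ hη₂ hκ₁ hκ₂ hq hθ₂' hcond
end

section
/- Assume θ₁ = 1, q = κ₁ and b/η₁ < κ₂/(κ₁ + 1 − θ₂). Then there exist constants β, ρ, σ₀, ε₀, z* > 0 and 0 < δ < β^{−1} such that for all 0 < σ < σ₀ and all x, y with 0 < x, y ≤ ε₀ and y x^{−β} ≥ z*, one has H̃_σ(x,y) > 0. -/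
/-!
Take `β = κ₂ / s` with `s = κ₁ + 1 - θ₂`. On the region `y ≥ z* x^β` this gives
`x^κ₂ = (x^β)^s ≤ (y / z*)^s`, so the cross term of the bracket satisfies
`η₂ y^(θ₂-1) x^κ₂ ≤ η₂ z*^(-s) y^κ₁`. As `θ₁ = 1` and `q = κ₁`, the bracket is then at least
`(β η₁ - (1 + σ) b - η₂ z*^(-s)) y^κ₁`, and the hypothesis `b / η₁ < κ₂ / s` says exactly
`β η₁ > b`; so for small `σ` and large `z*` the bracket is nonnegative, while the two remaining
terms of `H̃_σ` are positive.
-/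

open Real

section Htilde

variable (a b η₁ η₂ κ₁ κ₂ p q θ₁ θ₂ : ℝ)

noncomputable def htildeBracket (β σ x y : ℝ) : ℝ :=
  β * a * (1 - σ) * x ^ p - (1 + σ) * b * y ^ q
    + β * η₁ * x ^ (θ₁ - 1) * y ^ κ₁ - η₂ * y ^ (θ₂ - 1) * x ^ κ₂

noncomputable def htilde (β ρ δ σ x y : ℝ) : ℝ :=
  δ * (x ^ (β * δ) * y ^ (-δ)) * htildeBracket a b η₁ η₂ κ₁ κ₂ p q θ₁ θ₂ β σ x y
    + b * ρ * (1 - σ) * y ^ (ρ + q) + ρ * η₂ * y ^ (ρ + θ₂ - 1) * x ^ κ₂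

variable {a b η₁ η₂ κ₁ κ₂ p q θ₁ θ₂}

theorem htilde_pos_of_bracket_nonneg {β ρ δ σ x y : ℝ} (hb : 0 ≤ b) (hη₂ : 0 < η₂)
    (hρ : 0 < ρ) (hδ : 0 ≤ δ) (hσ : σ ≤ 1) (hx : 0 < x) (hy : 0 < y)
    (h : 0 ≤ htildeBracket a b η₁ η₂ κ₁ κ₂ p q θ₁ θ₂ β σ x y) :
    0 < htilde a b η₁ η₂ κ₁ κ₂ p q θ₁ θ₂ β ρ δ σ x y := by
  have hσ' : 0 ≤ 1 - σ := by linarith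
  have h₁ : 0 ≤ δ * (x ^ (β * δ) * y ^ (-δ)) * htildeBracket a b η₁ η₂ κ₁ κ₂ p q θ₁ θ₂ β σ x y :=
    mul_nonneg (by positivity) h
  have h₂ : 0 ≤ b * ρ * (1 - σ) * y ^ (ρ + q) := by positivity
  have h₃ : 0 < ρ * η₂ * y ^ (ρ + θ₂ - 1) * x ^ κ₂ := by positivity
  unfold htilde
  linarith

end Htilde

theorem rpow_mul_rpow_le_of_le_mul_rpow_neg {x y z β s : ℝ} (hx : 0 < x) (hz : 0 ≤ z)
    (hs : 0 ≤ s) (h : z ≤ y * x ^ (-β)) : z ^ s * x ^ (β * s) ≤ y ^ s := by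
  have hzx : z * x ^ β ≤ y := by
    calc z * x ^ β ≤ y * x ^ (-β) * x ^ β := by gcongr
      _ = y := by rw [mul_assoc, ← rpow_add hx, neg_add_cancel, rpow_zero, mul_one]
  calc z ^ s * x ^ (β * s) = (z * x ^ β) ^ s := by
        rw [mul_rpow hz (by positivity), rpow_mul hx.le]
    _ ≤ y ^ s := rpow_le_rpow (by positivity) hzx hs

theorem htildeBracket_nonneg {a b η₁ η₂ κ₁ κ₂ p θ₂ β σ x y z : ℝ} (ha : 0 ≤ a) (hη₂ : 0 ≤ η₂)
    (hs : 0 < κ₁ + 1 - θ₂) (hβs : β * (κ₁ + 1 - θ₂) = κ₂) (hβ : 0 ≤ β) (hσ : σ ≤ 1)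
    (hσb : 2 * σ * b ≤ β * η₁ - b) (hzη : 2 * η₂ ≤ (β * η₁ - b) * z ^ (κ₁ + 1 - θ₂))
    (hx : 0 < x) (hy : 0 < y) (hz : 0 < z) (hxy : z ≤ y * x ^ (-β)) :
    0 ≤ htildeBracket a b η₁ η₂ κ₁ κ₂ p κ₁ 1 θ₂ β σ x y := by
  set s := κ₁ + 1 - θ₂
  set m := β * η₁ - b
  set c := y ^ (θ₂ - 1) * x ^ κ₂
  have hc : 0 ≤ c := by positivity
  have hzs : 0 < z ^ s := by positivity
  have hm : 0 ≤ m := nonneg_of_mul_nonneg_left (by linarith) hzs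
  have hcross : z ^ s * c ≤ y ^ κ₁ := by
    have h := rpow_mul_rpow_le_of_le_mul_rpow_neg hx hz.le hs.le hxy
    rw [hβs] at h
    calc z ^ s * c = y ^ (θ₂ - 1) * (z ^ s * x ^ κ₂) := by ring
      _ ≤ y ^ (θ₂ - 1) * y ^ s := by gcongr
      _ = y ^ κ₁ := by rw [← rpow_add hy]; congr 1; ring
  have hneg : 2 * (η₂ * c) ≤ m * y ^ κ₁ :=
    calc 2 * (η₂ * c) = 2 * η₂ * c := by ring
      _ ≤ m * z ^ s * c := by gcongr
      _ = m * (z ^ s * c) := by ring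
      _ ≤ m * y ^ κ₁ := by gcongr
  have hσy : 2 * σ * b * y ^ κ₁ ≤ m * y ^ κ₁ := by gcongr
  have hfirst : 0 ≤ β * a * (1 - σ) * x ^ p := by
    have : 0 ≤ 1 - σ := by linarith
    positivity
  unfold htildeBracket
  rw [sub_self, rpow_zero, mul_one]
  linarith

theorem Htilde_pos_case_iid_general (a b η₁ η₂ κ₁ κ₂ p q θ₁ θ₂ : ℝ)
    (ha : 0 < a) (hb : 0 < b) (hη₁ : 0 < η₁) (hη₂ : 0 < η₂)
    (hκ₁ : 0 < κ₁) (hκ₂ : 0 < κ₂)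
    (hθ₂' : θ₂ < 1)
    (hθ₁eq : θ₁ = 1) (hqκ : q = κ₁) (hcond : b / η₁ < κ₂ / (κ₁ + 1 - θ₂)) :
    ∃ β ρ σ₀ ε₀ zstar δ : ℝ,
      0 < β ∧ 0 < ρ ∧ 0 < σ₀ ∧ 0 < ε₀ ∧ 0 < zstar ∧ 0 < δ ∧ δ < β⁻¹ ∧
      ∀ σ : ℝ, 0 < σ → σ < σ₀ → ∀ x y : ℝ,
        0 < x → x ≤ ε₀ → 0 < y → y ≤ ε₀ → y * x ^ (-β) ≥ zstar →
        0 < δ * (x ^ (β * δ) * y ^ (-δ)) *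
              (β * a * (1 - σ) * x ^ p - (1 + σ) * b * y ^ q
                + β * η₁ * x ^ (θ₁ - 1) * y ^ κ₁ - η₂ * y ^ (θ₂ - 1) * x ^ κ₂)
            + b * ρ * (1 - σ) * y ^ (ρ + q) + ρ * η₂ * y ^ (ρ + θ₂ - 1) * x ^ κ₂ := by
  subst θ₁ q
  have hs : 0 < κ₁ + 1 - θ₂ := by linarith
  set s := κ₁ + 1 - θ₂
  set β := κ₂ / s
  have hβ : 0 < β := div_pos hκ₂ hs
  have hβs : β * s = κ₂ := div_mul_cancel₀ κ₂ hs.ne'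
  have hm : 0 < β * η₁ - b := by
    rw [div_lt_div_iff₀ hη₁ hs] at hcond
    rw [div_mul_eq_mul_div, sub_pos, lt_div_iff₀ hs]
    linarith
  set m := β * η₁ - b
  have hzs : ((2 * η₂ / m) ^ s⁻¹) ^ s = 2 * η₂ / m := rpow_inv_rpow (by positivity) hs.ne'
  refine ⟨β, 1, min 1 (m / (2 * b)), 1, (2 * η₂ / m) ^ s⁻¹, β⁻¹ / 2, hβ, one_pos,
    by positivity, one_pos, by positivity, by positivity, by linarith [inv_pos.mpr hβ], ?_⟩
  intro σ _ hσ₀ x y hx _ hy _ hxy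
  have hσ : σ ≤ 1 := (hσ₀.trans_le (min_le_left _ _)).le
  have hσb : 2 * σ * b ≤ m := by
    have := (hσ₀.trans_le (min_le_right _ _)).le
    rw [le_div_iff₀ (by positivity)] at this
    linarith
  refine htilde_pos_of_bracket_nonneg hb.le hη₂ one_pos (by positivity) hσ hx hy
    (htildeBracket_nonneg ha.le hη₂.le hs hβs hβ.le hσ hσb ?_ hx hy (by positivity) hxy)
  rw [hzs, mul_div_cancel₀ _ hm.ne']

/-- Lemma 3.11 (case (iid)): there exist `β, ρ, σ₀, ε₀, z* > 0` and `0 < δ < β⁻¹`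
such that for all `0 < σ < σ₀`, `0 < x, y ≤ ε₀` with `y x^(−β) ≥ z*`, one has
`H̃_σ(x,y) := δ x^(βδ) y^(−δ) [βa(1−σ)x^p − (1+σ)b y^q + βη₁ x^(θ₁−1) y^(κ₁)
  − η₂ y^(θ₂−1) x^(κ₂)] + bρ(1−σ) y^(ρ+q) + ρη₂ y^(ρ+θ₂−1) x^(κ₂) > 0`. -/
theorem Htilde_pos_case_iid (a b η₁ η₂ κ₁ κ₂ p q θ₁ θ₂ : ℝ)
    (ha : 0 < a) (hb : 0 < b) (hη₁ : 0 < η₁) (hη₂ : 0 < η₂)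
    (hκ₁ : 0 < κ₁) (hκ₂ : 0 < κ₂) (hp : 0 ≤ p) (hq : 0 ≤ q)
    (hθ₁ : 1 ≤ θ₁) (hθ₂ : 0 ≤ θ₂) (hθ₂' : θ₂ < 1)
    (hθ₁eq : θ₁ = 1) (hqκ : q = κ₁) (hcond : b / η₁ < κ₂ / (κ₁ + 1 - θ₂)) :
    ∃ β ρ σ₀ ε₀ zstar δ : ℝ,
      0 < β ∧ 0 < ρ ∧ 0 < σ₀ ∧ 0 < ε₀ ∧ 0 < zstar ∧ 0 < δ ∧ δ < β⁻¹ ∧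
      ∀ σ : ℝ, 0 < σ → σ < σ₀ → ∀ x y : ℝ,
        0 < x → x ≤ ε₀ → 0 < y → y ≤ ε₀ → y * x ^ (-β) ≥ zstar →
        0 < δ * (x ^ (β * δ) * y ^ (-δ)) *
              (β * a * (1 - σ) * x ^ p - (1 + σ) * b * y ^ q
                + β * η₁ * x ^ (θ₁ - 1) * y ^ κ₁ - η₂ * y ^ (θ₂ - 1) * x ^ κ₂)
            + b * ρ * (1 - σ) * y ^ (ρ + q) + ρ * η₂ * y ^ (ρ + θ₂ - 1) * x ^ κ₂ :=
  Htilde_pos_case_iid_general a b η₁ η₂ κ₁ κ₂ p q θ₁ θ₂ ha hb hη₁ hη₂ hκ₁ hκ₂ hθ₂' hθ₁eq hqκ hcond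
end

section
/- Assume θ₁ − 1 > κ₂(q − κ₁)/(q + 1 − θ₂) and p > κ₂ q/(q + 1 − θ₂). Then there exist constants r, ε ∈ (0,1), β > 0 and c₀ > 0 such that H(x,y) ≥ c₀ for all x, y with 0 < x, y < ε. -/
open Real Filter Topology

/-!
With `r * β ≥ κ₂` and `r ≤ 1 - θ₂`, `H` is a sum of four monomials in `x, y`: the positive
ones `T₁ = b(r) x^(-rβ) y^(q+r)` and `T₂ = η₂ x^(κ₂-rβ) y^(θ₂-1+r) ≥ η₂`, and two negative ones.
The two hypotheses say exactly that the exponent of each negative monomial lies coordinatewise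
above a point of the segment joining the exponents of `T₁` and `T₂`, with strict inequality in
the sum of coordinates. By the weighted AM–GM inequality each negative monomial is then at most
`(T₁ + T₂) / 4` near the origin, so `H ≥ T₂ / 2 ≥ η₂ / 2`.
-/

theorem rpow_mul_rpow_le_of_le {x y ε a b a' b' : ℝ} (hx : 0 < x) (hxε : x ≤ ε) (hy : 0 < y)
    (hyε : y ≤ ε) (ha : a' ≤ a) (hb : b' ≤ b) :
    x ^ a * y ^ b ≤ ε ^ (a - a' + (b - b')) * (x ^ a' * y ^ b') := by
  have hε : 0 < ε := hx.trans_le hxε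
  calc x ^ a * y ^ b = x ^ (a - a') * y ^ (b - b') * (x ^ a' * y ^ b') := by
        rw [← sub_add_cancel a a', rpow_add hx, ← sub_add_cancel b b', rpow_add hy]
        simp only [add_sub_cancel_right]
        ring
    _ ≤ ε ^ (a - a') * ε ^ (b - b') * (x ^ a' * y ^ b') := by gcongr
    _ = ε ^ (a - a' + (b - b')) * (x ^ a' * y ^ b') := by rw [rpow_add hε]

theorem monomial_rpow_mul_monomial_rpow {x y : ℝ} (hx : 0 < x) (hy : 0 < y) {B η : ℝ}
    (hB : 0 ≤ B) (hη : 0 ≤ η) (a₁ b₁ a₂ b₂ t : ℝ) :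
    (B * x ^ a₁ * y ^ b₁) ^ (1 - t) * (η * x ^ a₂ * y ^ b₂) ^ t
      = B ^ (1 - t) * η ^ t * x ^ (a₁ * (1 - t) + a₂ * t) * y ^ (b₁ * (1 - t) + b₂ * t) := by
  rw [mul_rpow (by positivity) (by positivity), mul_rpow hB (by positivity),
    mul_rpow (by positivity) (by positivity), mul_rpow hη (by positivity),
    ← rpow_mul hx.le, ← rpow_mul hy.le, ← rpow_mul hx.le, ← rpow_mul hy.le,
    rpow_add hx, rpow_add hy]
  ring

theorem eventually_monomial_le_of_exponent_above {B η C δ a₁ b₁ a₂ b₂ a b t : ℝ}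
    (hB : 0 < B) (hη : 0 < η) (hC : 0 ≤ C) (hδ : 0 < δ) (ht₀ : 0 ≤ t) (ht₁ : t ≤ 1)
    (ha : a₁ * (1 - t) + a₂ * t ≤ a) (hb : b₁ * (1 - t) + b₂ * t ≤ b)
    (hgap : a₁ * (1 - t) + a₂ * t + (b₁ * (1 - t) + b₂ * t) < a + b) :
    ∀ᶠ ε in 𝓝[>] 0, ∀ x y, 0 < x → x < ε → 0 < y → y < ε →
      C * x ^ a * y ^ b ≤ δ * (B * x ^ a₁ * y ^ b₁ + η * x ^ a₂ * y ^ b₂) := by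
  set a' := a₁ * (1 - t) + a₂ * t
  set b' := b₁ * (1 - t) + b₂ * t
  set e := a - a' + (b - b')
  have he : 0 < e := by linarith
  set K := B ^ (1 - t) * η ^ t
  have hK : 0 < K := by positivity
  have hlim : Tendsto (fun ε : ℝ => C * ε ^ e) (𝓝[>] 0) (𝓝 0) := by
    have : ContinuousAt (fun ε : ℝ => C * ε ^ e) 0 :=
      continuousAt_const.mul (continuousAt_rpow_const _ _ (Or.inr he.le))
    simpa [zero_rpow he.ne'] using this.tendsto.mono_left nhdsWithin_le_nhds
  filter_upwards [hlim.eventually (gt_mem_nhds (mul_pos hδ hK))]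
    with ε hε x y hx hxε hy hyε
  have hT₁ : 0 ≤ B * x ^ a₁ * y ^ b₁ := by positivity
  have hT₂ : 0 ≤ η * x ^ a₂ * y ^ b₂ := by positivity
  calc C * x ^ a * y ^ b = C * (x ^ a * y ^ b) := by ring
    _ ≤ C * (ε ^ e * (x ^ a' * y ^ b')) :=
        mul_le_mul_of_nonneg_left (rpow_mul_rpow_le_of_le hx hxε.le hy hyε.le ha hb) hC
    _ = C * ε ^ e * (x ^ a' * y ^ b') := by ring
    _ ≤ δ * K * (x ^ a' * y ^ b') := by gcongr
    _ = δ * ((B * x ^ a₁ * y ^ b₁) ^ (1 - t) * (η * x ^ a₂ * y ^ b₂) ^ t) := by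
        rw [monomial_rpow_mul_monomial_rpow hx hy hB.le hη.le]; ring
    _ ≤ δ * ((1 - t) * (B * x ^ a₁ * y ^ b₁) + t * (η * x ^ a₂ * y ^ b₂)) := by
        gcongr
        exact geom_mean_le_arith_mean2_weighted (by linarith) ht₀ hT₁ hT₂ (by ring)
    _ ≤ δ * (B * x ^ a₁ * y ^ b₁ + η * x ^ a₂ * y ^ b₂) :=
        mul_le_mul_of_nonneg_left (by nlinarith) hδ.le

theorem ite_add_ite_add_ite_pos {P₁ P₂ P₃ : Prop} [Decidable P₁] [Decidable P₂] [Decidable P₃]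
    {c₁ c₂ c₃ : ℝ} (h₁ : 0 ≤ c₁) (h₂ : 0 ≤ c₂) (h₃ : 0 ≤ c₃)
    (h : (0 < c₁ ∧ P₁) ∨ (0 < c₂ ∧ P₂) ∨ (0 < c₃ ∧ P₃)) :
    0 < (if P₁ then c₁ else 0) + (if P₂ then c₂ else 0) + (if P₃ then c₃ else 0) := by
  rcases h with ⟨hc, hP⟩ | ⟨hc, hP⟩ | ⟨hc, hP⟩
  · have : 0 < if P₁ then c₁ else 0 := by rwa [if_pos hP]
    positivity
  · have : 0 < if P₂ then c₂ else 0 := by rwa [if_pos hP]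
    positivity
  · have : 0 < if P₃ then c₃ else 0 := by rwa [if_pos hP]
    positivity

noncomputable def aCoeff (a₁ a₂ a₃ p₁ p₂ p₃ p α₁ β r : ℝ) : ℝ :=
  (if p₁ = p then a₁ else 0) + (if p₂ = p then a₂ * (r * β + 1) else 0)
    + (if p₃ = p then a₃ * ((r * β + 1) * Gamma (α₁ + r * β)
        / (Gamma α₁ * Gamma (2 + r * β))) else 0)

noncomputable def bCoeff (b₁ b₂ b₃ q₁ q₂ q₃ q α₂ r : ℝ) : ℝ :=
  (if q₁ = q then b₁ else 0) + (if q₂ = q then b₂ * (1 - r) else 0)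
    + (if q₃ = q then b₃ * ((1 - r) * Gamma (α₂ - r) / (Gamma α₂ * Gamma (2 - r))) else 0)

theorem aCoeff_nonneg {a₁ a₂ a₃ α₁ β r : ℝ} (ha₁ : 0 ≤ a₁) (ha₂ : 0 ≤ a₂) (ha₃ : 0 ≤ a₃)
    (hα₁ : 0 < α₁) (hrβ : 0 ≤ r * β) (p₁ p₂ p₃ p : ℝ) :
    0 ≤ aCoeff a₁ a₂ a₃ p₁ p₂ p₃ p α₁ β r := by
  unfold aCoeff
  positivity

theorem bCoeff_pos {b₁ b₂ b₃ q₁ q₂ q₃ q α₂ r : ℝ} (hb₁ : 0 ≤ b₁) (hb₂ : 0 ≤ b₂) (hb₃ : 0 ≤ b₃)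
    (hr : r < 1) (hrα : r < α₂) (hα₂ : 0 < α₂)
    (hq : (b₁ ≠ 0 ∧ q = q₁) ∨ (b₂ ≠ 0 ∧ q = q₂) ∨ (b₃ ≠ 0 ∧ q = q₃)) :
    0 < bCoeff b₁ b₂ b₃ q₁ q₂ q₃ q α₂ r := by
  have h₁ : 0 < 1 - r := sub_pos.2 hr
  have hΓ : 0 < (1 - r) * Gamma (α₂ - r) / (Gamma α₂ * Gamma (2 - r)) := by
    have := Gamma_pos_of_pos (sub_pos.2 hrα)
    have := Gamma_pos_of_pos (by linarith : 0 < 2 - r)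
    positivity
  refine ite_add_ite_add_ite_pos hb₁ (by positivity) (by positivity) ?_
  refine hq.imp (fun h => ⟨hb₁.lt_of_ne' h.1, h.2.symm⟩) (Or.imp (fun h => ?_) fun h => ?_)
  · exact ⟨mul_pos (hb₂.lt_of_ne' h.1) h₁, h.2.symm⟩
  · exact ⟨mul_pos (hb₃.lt_of_ne' h.1) hΓ, h.2.symm⟩

noncomputable def H (A B β r p q η₁ η₂ κ₁ κ₂ θ₁ θ₂ x y : ℝ) : ℝ :=
  B * (x ^ (-β) * y) ^ r * y ^ q + η₂ * (x ^ (-β) * y) ^ r * y ^ (θ₂ - 1) * x ^ κ₂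
    - A * β * (x ^ (-β) * y) ^ r * x ^ p - η₁ * β * (x ^ (-β) * y) ^ r * x ^ (θ₁ - 1) * y ^ κ₁

theorem H_eq_sum_monomials {x y : ℝ} (hx : 0 < x) (hy : 0 < y) (A B β r p q η₁ η₂ κ₁ κ₂ θ₁ θ₂ : ℝ) :
    H A B β r p q η₁ η₂ κ₁ κ₂ θ₁ θ₂ x y =
      B * x ^ (-(r * β)) * y ^ (q + r) + η₂ * x ^ (κ₂ - r * β) * y ^ (θ₂ - 1 + r)
        - A * β * x ^ (p - r * β) * y ^ r - η₁ * β * x ^ (θ₁ - 1 - r * β) * y ^ (κ₁ + r) := by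
  rw [H, mul_rpow (by positivity) hy.le, ← rpow_mul hx.le]
  simp only [sub_eq_add_neg, rpow_add hx, rpow_add hy]
  ring_nf

theorem exists_interpolation_weight {q θ₁ θ₂ κ₁ κ₂ : ℝ} (hq : 0 ≤ q) (hθ₁ : 1 ≤ θ₁) (hθ₂ : θ₂ < 1)
    (hκ₁ : 0 < κ₁) (hcond : θ₁ - 1 > κ₂ * (q - κ₁) / (q + 1 - θ₂)) :
    ∃ m, 0 ≤ m ∧ m ≤ 1 ∧ m * κ₂ ≤ θ₁ - 1 ∧ q - m * (q + 1 - θ₂) ≤ κ₁ ∧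
      m * κ₂ + (q - m * (q + 1 - θ₂)) < θ₁ - 1 + κ₁ := by
  have hD : 0 < q + 1 - θ₂ := by linarith
  rcases le_or_gt κ₁ q with hκq | hqκ
  · refine ⟨(q - κ₁) / (q + 1 - θ₂), by positivity, (div_le_one hD).2 (by linarith), ?_⟩
    have hmD : (q - κ₁) / (q + 1 - θ₂) * (q + 1 - θ₂) = q - κ₁ := div_mul_cancel₀ _ hD.ne'
    have hmκ : (q - κ₁) / (q + 1 - θ₂) * κ₂ < θ₁ - 1 := by rwa [div_mul_eq_mul_div, mul_comm]
    refine ⟨hmκ.le, ?_, ?_⟩ <;> linarith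
  · exact ⟨0, le_rfl, zero_le_one, by linarith, by linarith, by linarith⟩

theorem exists_forall_H_ge {A B β r p q η₁ η₂ κ₁ κ₂ θ₁ θ₂ : ℝ} (hA : 0 ≤ A) (hB : 0 < B)
    (hβ : 0 ≤ β) (hη₁ : 0 ≤ η₁) (hη₂ : 0 < η₂) (hκ₁ : 0 < κ₁) (hθ₁ : 1 ≤ θ₁) (hθ₂ : θ₂ < 1)
    (hq : 0 ≤ q) (hrθ : r ≤ 1 - θ₂) (hrβ : κ₂ ≤ r * β)
    (hcond₁ : θ₁ - 1 > κ₂ * (q - κ₁) / (q + 1 - θ₂)) (hcond₂ : p > κ₂ * q / (q + 1 - θ₂)) :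
    ∃ ε, 0 < ε ∧ ε < 1 ∧ ∀ x y, 0 < x → x < ε → 0 < y → y < ε →
      H A B β r p q η₁ η₂ κ₁ κ₂ θ₁ θ₂ x y ≥ η₂ / 2 := by
  have hD : 0 < q + 1 - θ₂ := by linarith
  set l := q / (q + 1 - θ₂)
  have hlD : l * (q + 1 - θ₂) = q := div_mul_cancel₀ _ hD.ne'
  have hlκ : l * κ₂ < p := by rwa [div_mul_eq_mul_div, mul_comm]
  have h₁ := eventually_monomial_le_of_exponent_above (a₁ := -(r * β)) (b₁ := q + r)
    (a₂ := κ₂ - r * β) (b₂ := θ₂ - 1 + r) (a := p - r * β) (b := r) (t := l) (C := A * β)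
    (δ := 1 / 4) hB hη₂ (by positivity) (by norm_num) (by positivity)
    ((div_le_one hD).2 (by linarith)) (by linear_combination hlκ.le)
    (by linear_combination -hlD) (by linear_combination hlκ - hlD)
  obtain ⟨m, hm₀, hm₁, hmx, hmy, hmgap⟩ := exists_interpolation_weight hq hθ₁ hθ₂ hκ₁ hcond₁
  have h₂ := eventually_monomial_le_of_exponent_above (a₁ := -(r * β)) (b₁ := q + r)
    (a₂ := κ₂ - r * β) (b₂ := θ₂ - 1 + r) (a := θ₁ - 1 - r * β) (b := κ₁ + r) (t := m)
    (C := η₁ * β) (δ := 1 / 4) hB hη₂ (by positivity) (by norm_num) hm₀ hm₁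
    (by linear_combination hmx) (by linear_combination hmy) (by linear_combination hmgap)
  obtain ⟨ε, ⟨⟨h₁, h₂⟩, hε₁⟩, hε₀⟩ := ((h₁.and h₂).and
    (eventually_nhdsWithin_of_eventually_nhds (eventually_lt_nhds zero_lt_one))).and
    self_mem_nhdsWithin |>.exists
  refine ⟨ε, hε₀, hε₁, fun x y hx hxε hy hyε => ?_⟩
  have hT₁ : 0 ≤ B * x ^ (-(r * β)) * y ^ (q + r) := by positivity
  have hT₂ : η₂ ≤ η₂ * x ^ (κ₂ - r * β) * y ^ (θ₂ - 1 + r) := by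
    rw [mul_assoc]
    refine le_mul_of_one_le_right hη₂.le (one_le_mul_of_one_le_of_one_le ?_ ?_) <;>
      exact one_le_rpow_of_pos_of_le_one_of_nonpos ‹_› (by linarith) (by linarith)
  rw [H_eq_sum_monomials hx hy, ge_iff_le]
  linarith [h₁ x y hx hxε hy hyε, h₂ x y hx hxε hy hyε]

theorem H_lower_bound_case_iiia_general (α₁ α₂ a₁ a₂ a₃ b₁ b₂ b₃ p₁ p₂ p₃ q₁ q₂ q₃ η₁ η₂ κ₁ κ₂ θ₁ θ₂ p q : ℝ)
    (hα₁ : 1 < α₁) (hα₂ : 1 < α₂)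
    (ha₁ : 0 ≤ a₁) (ha₂ : 0 ≤ a₂) (ha₃ : 0 ≤ a₃)
    (hb₁ : 0 ≤ b₁) (hb₂ : 0 ≤ b₂) (hb₃ : 0 ≤ b₃)
    (hq₁ : 0 ≤ q₁) (hq₂ : 0 ≤ q₂) (hq₃ : 0 ≤ q₃)
    (hη₁ : 0 < η₁) (hη₂ : 0 < η₂) (hκ₁ : 0 < κ₁) (hκ₂ : 0 < κ₂)
    (hθ₁ : 1 ≤ θ₁) (hθ₂ : 0 ≤ θ₂) (hθ₂' : θ₂ < 1)
    (hqmem : (b₁ ≠ 0 ∧ q = q₁) ∨ (b₂ ≠ 0 ∧ q = q₂) ∨ (b₃ ≠ 0 ∧ q = q₃))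
    (hcond₁ : θ₁ - 1 > κ₂ * (q - κ₁) / (q + 1 - θ₂)) (hcond₂ : p > κ₂ * q / (q + 1 - θ₂)) :
    ∃ r ε β c₀ : ℝ, 0 < r ∧ r < 1 ∧ 0 < ε ∧ ε < 1 ∧ 0 < β ∧ 0 < c₀ ∧
      ∀ x y : ℝ, 0 < x → x < ε → 0 < y → y < ε →
        ((if q₁ = q then b₁ else 0) + (if q₂ = q then b₂ * (1 - r) else 0)
              + (if q₃ = q then b₃ * ((1 - r) * Real.Gamma (α₂ - r)
                  / (Real.Gamma α₂ * Real.Gamma (2 - r))) else 0))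
            * (x ^ (-β) * y) ^ r * y ^ q
          + η₂ * (x ^ (-β) * y) ^ r * y ^ (θ₂ - 1) * x ^ κ₂
          - ((if p₁ = p then a₁ else 0) + (if p₂ = p then a₂ * (r * β + 1) else 0)
              + (if p₃ = p then a₃ * ((r * β + 1) * Real.Gamma (α₁ + r * β)
                  / (Real.Gamma α₁ * Real.Gamma (2 + r * β))) else 0))
            * β * (x ^ (-β) * y) ^ r * x ^ p
          - η₁ * β * (x ^ (-β) * y) ^ r * x ^ (θ₁ - 1) * y ^ κ₁
        ≥ c₀ := by
  have hq : 0 ≤ q := by rcases hqmem with ⟨-, rfl⟩ | ⟨-, rfl⟩ | ⟨-, rfl⟩ <;> assumption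
  set r := (1 - θ₂) / 2 with hr
  have hr₀ : 0 < r := by positivity
  have hr₁ : r < 1 := by linarith
  set β := (κ₂ + 1) / r
  have hβ : 0 < β := by positivity
  have hrβ : r * β = κ₂ + 1 := mul_div_cancel₀ _ hr₀.ne'
  obtain ⟨ε, hε₀, hε₁, hH⟩ := exists_forall_H_ge (r := r)
    (aCoeff_nonneg (β := β) (r := r) ha₁ ha₂ ha₃ (zero_lt_one.trans hα₁) (by positivity)
      p₁ p₂ p₃ p)
    (bCoeff_pos hb₁ hb₂ hb₃ hr₁ (hr₁.trans hα₂) (zero_lt_one.trans hα₂) hqmem)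
    hβ.le hη₁.le hη₂ hκ₁ hθ₁ hθ₂' hq (by linarith) (by linarith) hcond₁ hcond₂
  exact ⟨r, ε, β, η₂ / 2, hr₀, hr₁, hε₀, hε₁, hβ, by positivity, hH⟩

/-- Lemma 3.13 (case (iiia)): under the stated conditions there exist constants
`r, ε ∈ (0,1)`, `β > 0` and `c₀ > 0` such that `H(x,y) ≥ c₀` for all `0 < x, y < ε`,
where, writing `u := x^(−β) y`,
`H(x,y) := b(r) u^r y^q + η₂ u^r y^(θ₂−1) x^(κ₂) − a(r) β u^r x^p
  − η₁ β u^r x^(θ₁−1) y^(κ₁)`,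
with `a(r)`, `b(r)` the `r`-dependent coefficients built from the Gamma function,
and `p, q, a, b` the minimal exponents and associated coefficients. -/
theorem H_lower_bound_case_iiia (α₁ α₂ a₁ a₂ a₃ b₁ b₂ b₃ p₁ p₂ p₃ q₁ q₂ q₃ η₁ η₂ κ₁ κ₂ θ₁ θ₂ p q a b : ℝ)
    (hα₁ : 1 < α₁) (hα₁' : α₁ < 2) (hα₂ : 1 < α₂) (hα₂' : α₂ < 2)
    (ha₁ : 0 ≤ a₁) (ha₂ : 0 ≤ a₂) (ha₃ : 0 ≤ a₃)
    (hb₁ : 0 ≤ b₁) (hb₂ : 0 ≤ b₂) (hb₃ : 0 ≤ b₃)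
    (ha₂₃ : 0 < a₂ + a₃) (hb₂₃ : 0 < b₂ + b₃)
    (hp₁ : 0 ≤ p₁) (hp₂ : 0 ≤ p₂) (hp₃ : 0 ≤ p₃)
    (hq₁ : 0 ≤ q₁) (hq₂ : 0 ≤ q₂) (hq₃ : 0 ≤ q₃)
    (hη₁ : 0 < η₁) (hη₂ : 0 < η₂) (hκ₁ : 0 < κ₁) (hκ₂ : 0 < κ₂)
    (hθ₁ : 1 ≤ θ₁) (hθ₂ : 0 ≤ θ₂) (hθ₂' : θ₂ < 1)
    (hpmem : (a₁ ≠ 0 ∧ p = p₁) ∨ (a₂ ≠ 0 ∧ p = p₂) ∨ (a₃ ≠ 0 ∧ p = p₃))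
    (hpmin : (a₁ ≠ 0 → p ≤ p₁) ∧ (a₂ ≠ 0 → p ≤ p₂) ∧ (a₃ ≠ 0 → p ≤ p₃))
    (hqmem : (b₁ ≠ 0 ∧ q = q₁) ∨ (b₂ ≠ 0 ∧ q = q₂) ∨ (b₃ ≠ 0 ∧ q = q₃))
    (hqmin : (b₁ ≠ 0 → q ≤ q₁) ∧ (b₂ ≠ 0 → q ≤ q₂) ∧ (b₃ ≠ 0 → q ≤ q₃))
    (hadef : a = (if p₁ = p then a₁ else 0) + (if p₂ = p then a₂ else 0)
        + (if p₃ = p then a₃ else 0))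
    (hbdef : b = (if q₁ = q then b₁ else 0) + (if q₂ = q then b₂ else 0)
        + (if q₃ = q then b₃ else 0))
    (hcond₁ : θ₁ - 1 > κ₂ * (q - κ₁) / (q + 1 - θ₂)) (hcond₂ : p > κ₂ * q / (q + 1 - θ₂)) :
    ∃ r ε β c₀ : ℝ, 0 < r ∧ r < 1 ∧ 0 < ε ∧ ε < 1 ∧ 0 < β ∧ 0 < c₀ ∧
      ∀ x y : ℝ, 0 < x → x < ε → 0 < y → y < ε →
        ((if q₁ = q then b₁ else 0) + (if q₂ = q then b₂ * (1 - r) else 0)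
              + (if q₃ = q then b₃ * ((1 - r) * Real.Gamma (α₂ - r)
                  / (Real.Gamma α₂ * Real.Gamma (2 - r))) else 0))
            * (x ^ (-β) * y) ^ r * y ^ q
          + η₂ * (x ^ (-β) * y) ^ r * y ^ (θ₂ - 1) * x ^ κ₂
          - ((if p₁ = p then a₁ else 0) + (if p₂ = p then a₂ * (r * β + 1) else 0)
              + (if p₃ = p then a₃ * ((r * β + 1) * Real.Gamma (α₁ + r * β)
                  / (Real.Gamma α₁ * Real.Gamma (2 + r * β))) else 0))
            * β * (x ^ (-β) * y) ^ r * x ^ p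
          - η₁ * β * (x ^ (-β) * y) ^ r * x ^ (θ₁ - 1) * y ^ κ₁
        ≥ c₀ :=
  H_lower_bound_case_iiia_general α₁ α₂ a₁ a₂ a₃ b₁ b₂ b₃ p₁ p₂ p₃ q₁ q₂ q₃ η₁ η₂ κ₁ κ₂ θ₁ θ₂ p q
    hα₁ hα₂ ha₁ ha₂ ha₃ hb₁ hb₂ hb₃ hq₁ hq₂ hq₃ hη₁ hη₂ hκ₁ hκ₂ hθ₁ hθ₂ hθ₂' hqmem hcond₁ hcond₂
end

section
/- Assume θ₁ − 1 > κ₂(q − κ₁)/(q + 1 − θ₂), p = q = 0 and b/a > κ₂/(1 − θ₂). Then there exist constants r, ε ∈ (0,1), β > 0 and c₀ > 0 such that H(x,y) ≥ c₀ for all x, y with 0 < x, y < ε. -/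
/-!
With `p = q = 0` and `β := κ₂ / (1 - θ₂)`,
`H = (b(r) - β a(r)) u^r + η₂ u^r y^(θ₂-1) x^κ₂ - η₁ β u^r x^(θ₁-1) y^κ₁`.
The coefficients `a(r)`, `b(r)` are continuous at `r = 0` with values `a`, `b`, and
`b - β a > 0`, so some small `r ∈ (0, 1 - θ₂)` keeps `C := b(r) - β a(r)` positive; for small `y`
the last term is at most `C u^r / 2`, leaving `C u^r / 2 ≥ C / 2` when `u ≥ 1`. If `u < 1`,
then `y = x^β u` and the choice of `β` makes the powers of `x` cancel:
`u^r y^(θ₂-1) x^κ₂ = u^(r+θ₂-1) ≥ 1` since `r + θ₂ - 1 ≤ 0`, so the second term is at least `η₂`.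
-/

open Real Filter Topology

theorem Real.continuousAt_Gamma_of_pos {s : ℝ} (hs : 0 < s) : ContinuousAt Gamma s :=
  (differentiableAt_Gamma fun m h => by
    linarith [h ▸ hs, (m.cast_nonneg : (0:ℝ) ≤ m)]).continuousAt

theorem ContinuousAt.Gamma_of_pos {f : ℝ → ℝ} {x : ℝ} (hf : ContinuousAt f x) (hx : 0 < f x) :
    ContinuousAt (fun y => Gamma (f y)) x :=
  (Real.continuousAt_Gamma_of_pos hx).comp hf

theorem exists_rpow_lt {κ δ : ℝ} (hκ : 0 < κ) (hδ : 0 < δ) :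
    ∃ ε, 0 < ε ∧ ε < 1 ∧ ∀ y, 0 < y → y < ε → y ^ κ < δ := by
  have h : ∀ᶠ y in 𝓝 (0 : ℝ), y ^ κ < δ :=
    (continuousAt_rpow_const 0 κ (Or.inr hκ.le)).eventually
      (gt_mem_nhds (by simpa [zero_rpow hκ.ne'] using hδ))
  obtain ⟨ε, hε, hεδ⟩ := Metric.eventually_nhds_iff.1 h
  refine ⟨min ε (1 / 2), by positivity, (min_le_right _ _).trans_lt (by norm_num),
    fun y hy hyε => hεδ ?_⟩
  rw [Real.dist_0_eq_abs, abs_of_pos hy]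
  exact hyε.trans_le (min_le_left _ _)

theorem one_le_rpow_mul_rpow_mul_rpow {x y β r θ κ : ℝ} (hx : 0 < x) (hy : 0 < y)
    (hu : x ^ (-β) * y ≤ 1) (hr : r ≤ 1 - θ) (hκ : β * (1 - θ) = κ) :
    1 ≤ (x ^ (-β) * y) ^ r * y ^ (θ - 1) * x ^ κ := by
  set u := x ^ (-β) * y
  have hu0 : 0 < u := by positivity
  have hy : y = x ^ β * u := by
    rw [← mul_assoc, ← rpow_add hx, add_neg_cancel, rpow_zero, one_mul]
  have hexp : (x ^ β) ^ (θ - 1) * x ^ κ = 1 := by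
    rw [← rpow_mul hx.le, ← rpow_add hx, ← hκ, show β * (θ - 1) + β * (1 - θ) = 0 by ring,
      rpow_zero]
  calc 1 ≤ u ^ (r + (θ - 1)) := one_le_rpow_of_pos_of_le_one_of_nonpos hu0 hu (by linarith)
    _ = u ^ r * y ^ (θ - 1) * x ^ κ := by
      rw [rpow_add hu0, hy, mul_rpow (by positivity) hu0.le]
      linear_combination (u ^ r * u ^ (θ - 1)) * hexp.symm

theorem min_le_mul_rpow_add_mul {C η u r T : ℝ} (hC : 0 ≤ C) (hη : 0 ≤ η) (hr : 0 ≤ r)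
    (hT : 0 ≤ T) (hT₁ : u ≤ 1 → 1 ≤ T) (hu : 0 < u) :
    min C η ≤ C * u ^ r + η * T := by
  rcases le_or_gt 1 u with h | h
  · calc min C η ≤ C := min_le_left _ _
      _ ≤ C * u ^ r := le_mul_of_one_le_right hC (one_le_rpow h hr)
      _ ≤ _ := le_add_of_nonneg_right (mul_nonneg hη hT)
  · calc min C η ≤ η := min_le_right _ _
      _ ≤ η * T := le_mul_of_one_le_right hη (hT₁ h.le)
      _ ≤ _ := le_add_of_nonneg_left (by positivity)

theorem exists_pos_lt_and_mul_lt {A B : ℝ → ℝ} {a b β c : ℝ} (hA : Tendsto A (𝓝 0) (𝓝 a))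
    (hB : Tendsto B (𝓝 0) (𝓝 b)) (hab : β * a < b) (hc : 0 < c) :
    ∃ r, 0 < r ∧ r < c ∧ β * A r < B r := by
  have h : ∀ᶠ r in 𝓝[>] 0, β * A r < B r :=
    nhdsWithin_le_nhds (((hA.const_mul β).prodMk_nhds hB).eventually (isOpen_lt_prod.mem_nhds hab))
  obtain ⟨r, hAB, hr, hrc⟩ := (h.and (Ioo_mem_nhdsGT hc)).exists
  exact ⟨r, hr, hrc, hAB⟩

theorem ite_add_ite_add_ite_pos_s18 {a₁ a₂ a₃ p₁ p₂ p₃ p : ℝ} (h₁ : 0 ≤ a₁) (h₂ : 0 ≤ a₂) (h₃ : 0 ≤ a₃)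
    (h : (a₁ ≠ 0 ∧ p = p₁) ∨ (a₂ ≠ 0 ∧ p = p₂) ∨ (a₃ ≠ 0 ∧ p = p₃)) :
    0 < (if p₁ = p then a₁ else 0) + (if p₂ = p then a₂ else 0) + (if p₃ = p then a₃ else 0) := by
  rcases h with ⟨ha, rfl⟩ | ⟨ha, rfl⟩ | ⟨ha, rfl⟩ <;> simp only [if_true] <;> positivity

theorem tendsto_coeffA {α₁ a₁ a₂ a₃ p₁ p₂ p₃ p β : ℝ} (hα : 0 < α₁) :
    Tendsto (fun r : ℝ => (if p₁ = p then a₁ else 0) + (if p₂ = p then a₂ * (r * β + 1) else 0)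
      + (if p₃ = p then a₃ * ((r * β + 1) * Gamma (α₁ + r * β)
        / (Gamma α₁ * Gamma (2 + r * β))) else 0)) (𝓝 0)
      (𝓝 ((if p₁ = p then a₁ else 0) + (if p₂ = p then a₂ else 0)
        + (if p₃ = p then a₃ else 0))) := by
  have hΓ : ContinuousAt (fun r : ℝ => Gamma (α₁ + r * β)) 0 :=
    ContinuousAt.Gamma_of_pos (by fun_prop) (by simpa using hα)
  have hΓ₂ : ContinuousAt (fun r : ℝ => Gamma (2 + r * β)) 0 :=
    ContinuousAt.Gamma_of_pos (by fun_prop) (by norm_num)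
  have hden : Gamma α₁ * Gamma (2 + 0 * β) ≠ 0 := by simp [(Gamma_pos_of_pos hα).ne']
  convert ContinuousAt.tendsto ?_ using 2
  · simp [(Gamma_pos_of_pos hα).ne']
  · split_ifs <;> fun_prop (disch := assumption)

theorem tendsto_coeffB {α₂ b₁ b₂ b₃ q₁ q₂ q₃ q : ℝ} (hα : 0 < α₂) :
    Tendsto (fun r : ℝ => (if q₁ = q then b₁ else 0) + (if q₂ = q then b₂ * (1 - r) else 0)
      + (if q₃ = q then b₃ * ((1 - r) * Gamma (α₂ - r)
        / (Gamma α₂ * Gamma (2 - r))) else 0)) (𝓝 0)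
      (𝓝 ((if q₁ = q then b₁ else 0) + (if q₂ = q then b₂ else 0)
        + (if q₃ = q then b₃ else 0))) := by
  have hΓ : ContinuousAt (fun r : ℝ => Gamma (α₂ - r)) 0 :=
    ContinuousAt.Gamma_of_pos (by fun_prop) (by simpa using hα)
  have hΓ₂ : ContinuousAt (fun r : ℝ => Gamma (2 - r)) 0 :=
    ContinuousAt.Gamma_of_pos (by fun_prop) (by norm_num)
  have hden : Gamma α₂ * Gamma (2 - 0) ≠ 0 := by simp [(Gamma_pos_of_pos hα).ne']
  convert ContinuousAt.tendsto ?_ using 2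
  · simp [(Gamma_pos_of_pos hα).ne']
  · split_ifs <;> fun_prop (disch := assumption)

theorem exists_lower_bound_of_mul_lt {A B β r η₁ η₂ κ₁ κ₂ θ₁ θ₂ : ℝ} (hAB : β * A < B)
    (hβ : 0 < β) (hβκ : β * (1 - θ₂) = κ₂) (hr : 0 < r) (hrθ : r ≤ 1 - θ₂) (hη₁ : 0 < η₁)
    (hη₂ : 0 < η₂) (hκ₁ : 0 < κ₁) (hθ₁ : 1 ≤ θ₁) :
    ∃ ε c₀ : ℝ, 0 < ε ∧ ε < 1 ∧ 0 < c₀ ∧ ∀ x y : ℝ, 0 < x → x < ε → 0 < y → y < ε →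
      B * (x ^ (-β) * y) ^ r + η₂ * (x ^ (-β) * y) ^ r * y ^ (θ₂ - 1) * x ^ κ₂
        - A * β * (x ^ (-β) * y) ^ r - η₁ * β * (x ^ (-β) * y) ^ r * x ^ (θ₁ - 1) * y ^ κ₁
        ≥ c₀ := by
  set C := B - β * A
  have hC : 0 < C := sub_pos.2 hAB
  obtain ⟨ε, hε, hε₁, hsmall⟩ := exists_rpow_lt hκ₁ (by positivity : 0 < C / 2 / (η₁ * β))
  refine ⟨ε, min (C / 2) η₂, hε, hε₁, lt_min (half_pos hC) hη₂, fun x y hx hxε hy hyε => ?_⟩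
  set u := x ^ (-β) * y
  have hu : 0 < u := by positivity
  have hloss : η₁ * β * u ^ r * x ^ (θ₁ - 1) * y ^ κ₁ ≤ C / 2 * u ^ r := by
    have hx₁ : x ^ (θ₁ - 1) ≤ 1 := rpow_le_one hx.le (by linarith) (by linarith)
    have hy₁ : η₁ * β * y ^ κ₁ ≤ C / 2 :=
      ((lt_div_iff₀' (by positivity)).1 (hsmall y hy hyε)).le
    calc η₁ * β * u ^ r * x ^ (θ₁ - 1) * y ^ κ₁ ≤ η₁ * β * u ^ r * 1 * y ^ κ₁ := by gcongr
      _ = η₁ * β * y ^ κ₁ * u ^ r := by ring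
      _ ≤ C / 2 * u ^ r := by gcongr
  have hgain := min_le_mul_rpow_add_mul (half_pos hC).le hη₂.le hr.le (by positivity)
    (fun hu₁ => one_le_rpow_mul_rpow_mul_rpow hx hy hu₁ hrθ hβκ) hu
  linear_combination hgain + hloss

theorem H_lower_bound_case_iiib_general (α₁ α₂ a₁ a₂ a₃ b₁ b₂ b₃ p₁ p₂ p₃ q₁ q₂ q₃ η₁ η₂ κ₁ κ₂ θ₁ θ₂ p q a b : ℝ)
    (hα₁ : 1 < α₁) (hα₂ : 1 < α₂)
    (ha₁ : 0 ≤ a₁) (ha₂ : 0 ≤ a₂) (ha₃ : 0 ≤ a₃)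
    (hη₁ : 0 < η₁) (hη₂ : 0 < η₂) (hκ₁ : 0 < κ₁) (hκ₂ : 0 < κ₂)
    (hθ₁ : 1 ≤ θ₁) (hθ₂' : θ₂ < 1)
    (hpmem : (a₁ ≠ 0 ∧ p = p₁) ∨ (a₂ ≠ 0 ∧ p = p₂) ∨ (a₃ ≠ 0 ∧ p = p₃))
    (hadef : a = (if p₁ = p then a₁ else 0) + (if p₂ = p then a₂ else 0)
        + (if p₃ = p then a₃ else 0))
    (hbdef : b = (if q₁ = q then b₁ else 0) + (if q₂ = q then b₂ else 0)
        + (if q₃ = q then b₃ else 0))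
    (hp0 : p = 0) (hq0 : q = 0) (hcond₂ : b / a > κ₂ / (1 - θ₂)) :
    ∃ r ε β c₀ : ℝ, 0 < r ∧ r < 1 ∧ 0 < ε ∧ ε < 1 ∧ 0 < β ∧ 0 < c₀ ∧
      ∀ x y : ℝ, 0 < x → x < ε → 0 < y → y < ε →
        ((if q₁ = q then b₁ else 0) + (if q₂ = q then b₂ * (1 - r) else 0)
              + (if q₃ = q then b₃ * ((1 - r) * Real.Gamma (α₂ - r)
                  / (Real.Gamma α₂ * Real.Gamma (2 - r))) else 0))
            * (x ^ (-β) * y) ^ r * y ^ q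
          + η₂ * (x ^ (-β) * y) ^ r * y ^ (θ₂ - 1) * x ^ κ₂
          - ((if p₁ = p then a₁ else 0) + (if p₂ = p then a₂ * (r * β + 1) else 0)
              + (if p₃ = p then a₃ * ((r * β + 1) * Real.Gamma (α₁ + r * β)
                  / (Real.Gamma α₁ * Real.Gamma (2 + r * β))) else 0))
            * β * (x ^ (-β) * y) ^ r * x ^ p
          - η₁ * β * (x ^ (-β) * y) ^ r * x ^ (θ₁ - 1) * y ^ κ₁
        ≥ c₀ := by
  have hθ : 0 < 1 - θ₂ := sub_pos.2 hθ₂'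
  set β := κ₂ / (1 - θ₂)
  have hβ : 0 < β := div_pos hκ₂ hθ
  have ha : 0 < a := hadef ▸ ite_add_ite_add_ite_pos_s18 ha₁ ha₂ ha₃ hpmem
  have hab : β * a < b := by rwa [gt_iff_lt, lt_div_iff₀ ha] at hcond₂
  rw [hadef, hbdef] at hab
  obtain ⟨r, hr, hr₁, hAB⟩ := exists_pos_lt_and_mul_lt (tendsto_coeffA (zero_lt_one.trans hα₁))
    (tendsto_coeffB (zero_lt_one.trans hα₂)) hab (lt_min hθ one_pos)
  obtain ⟨ε, c₀, hε, hε₁, hc₀, hH⟩ := exists_lower_bound_of_mul_lt hAB hβ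
    (div_mul_cancel₀ κ₂ hθ.ne') hr (hr₁.trans_le (min_le_left _ _)).le hη₁ hη₂ hκ₁ hθ₁
  refine ⟨r, ε, β, c₀, hr, hr₁.trans_le (min_le_right _ _), hε, hε₁, hβ, hc₀,
    fun x y hx hxε hy hyε => ?_⟩
  simpa only [hp0, hq0, rpow_zero, mul_one] using hH x y hx hxε hy hyε

/-- Lemma 3.13 (case (iiib)): under the stated conditions there exist constants
`r, ε ∈ (0,1)`, `β > 0` and `c₀ > 0` such that `H(x,y) ≥ c₀` for all `0 < x, y < ε`,
where, writing `u := x^(−β) y`,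
`H(x,y) := b(r) u^r y^q + η₂ u^r y^(θ₂−1) x^(κ₂) − a(r) β u^r x^p
  − η₁ β u^r x^(θ₁−1) y^(κ₁)`,
with `a(r)`, `b(r)` the `r`-dependent coefficients built from the Gamma function,
and `p, q, a, b` the minimal exponents and associated coefficients. -/
theorem H_lower_bound_case_iiib (α₁ α₂ a₁ a₂ a₃ b₁ b₂ b₃ p₁ p₂ p₃ q₁ q₂ q₃ η₁ η₂ κ₁ κ₂ θ₁ θ₂ p q a b : ℝ)
    (hα₁ : 1 < α₁) (hα₁' : α₁ < 2) (hα₂ : 1 < α₂) (hα₂' : α₂ < 2)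
    (ha₁ : 0 ≤ a₁) (ha₂ : 0 ≤ a₂) (ha₃ : 0 ≤ a₃)
    (hb₁ : 0 ≤ b₁) (hb₂ : 0 ≤ b₂) (hb₃ : 0 ≤ b₃)
    (ha₂₃ : 0 < a₂ + a₃) (hb₂₃ : 0 < b₂ + b₃)
    (hp₁ : 0 ≤ p₁) (hp₂ : 0 ≤ p₂) (hp₃ : 0 ≤ p₃)
    (hq₁ : 0 ≤ q₁) (hq₂ : 0 ≤ q₂) (hq₃ : 0 ≤ q₃)
    (hη₁ : 0 < η₁) (hη₂ : 0 < η₂) (hκ₁ : 0 < κ₁) (hκ₂ : 0 < κ₂)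
    (hθ₁ : 1 ≤ θ₁) (hθ₂ : 0 ≤ θ₂) (hθ₂' : θ₂ < 1)
    (hpmem : (a₁ ≠ 0 ∧ p = p₁) ∨ (a₂ ≠ 0 ∧ p = p₂) ∨ (a₃ ≠ 0 ∧ p = p₃))
    (hpmin : (a₁ ≠ 0 → p ≤ p₁) ∧ (a₂ ≠ 0 → p ≤ p₂) ∧ (a₃ ≠ 0 → p ≤ p₃))
    (hqmem : (b₁ ≠ 0 ∧ q = q₁) ∨ (b₂ ≠ 0 ∧ q = q₂) ∨ (b₃ ≠ 0 ∧ q = q₃))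
    (hqmin : (b₁ ≠ 0 → q ≤ q₁) ∧ (b₂ ≠ 0 → q ≤ q₂) ∧ (b₃ ≠ 0 → q ≤ q₃))
    (hadef : a = (if p₁ = p then a₁ else 0) + (if p₂ = p then a₂ else 0)
        + (if p₃ = p then a₃ else 0))
    (hbdef : b = (if q₁ = q then b₁ else 0) + (if q₂ = q then b₂ else 0)
        + (if q₃ = q then b₃ else 0))
    (hcond₁ : θ₁ - 1 > κ₂ * (q - κ₁) / (q + 1 - θ₂)) (hp0 : p = 0) (hq0 : q = 0) (hcond₂ : b / a > κ₂ / (1 - θ₂)) :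
    ∃ r ε β c₀ : ℝ, 0 < r ∧ r < 1 ∧ 0 < ε ∧ ε < 1 ∧ 0 < β ∧ 0 < c₀ ∧
      ∀ x y : ℝ, 0 < x → x < ε → 0 < y → y < ε →
        ((if q₁ = q then b₁ else 0) + (if q₂ = q then b₂ * (1 - r) else 0)
              + (if q₃ = q then b₃ * ((1 - r) * Real.Gamma (α₂ - r)
                  / (Real.Gamma α₂ * Real.Gamma (2 - r))) else 0))
            * (x ^ (-β) * y) ^ r * y ^ q
          + η₂ * (x ^ (-β) * y) ^ r * y ^ (θ₂ - 1) * x ^ κ₂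
          - ((if p₁ = p then a₁ else 0) + (if p₂ = p then a₂ * (r * β + 1) else 0)
              + (if p₃ = p then a₃ * ((r * β + 1) * Real.Gamma (α₁ + r * β)
                  / (Real.Gamma α₁ * Real.Gamma (2 + r * β))) else 0))
            * β * (x ^ (-β) * y) ^ r * x ^ p
          - η₁ * β * (x ^ (-β) * y) ^ r * x ^ (θ₁ - 1) * y ^ κ₁
        ≥ c₀ :=
  H_lower_bound_case_iiib_general α₁ α₂ a₁ a₂ a₃ b₁ b₂ b₃ p₁ p₂ p₃ q₁ q₂ q₃ η₁ η₂ κ₁ κ₂ θ₁ θ₂ p q a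
    b hα₁ hα₂ ha₁ ha₂ ha₃ hη₁ hη₂ hκ₁ hκ₂ hθ₁ hθ₂' hpmem hadef hbdef hp0 hq0 hcond₂
end
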